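/- arXiv:cs/0311030 — 10 statements merged into one kernel-verified Lean document; each statement's English description precedes it below -/
import Mathlib

section
/- Under the uniform random assignment of the n subsets to k covers (each subset independently assigned to one of the k covers uniformly at random), the expected total coverage satisfies E[cov(f)] ≥ (1 - 1/e) · OPT, where OPT is the maximum total coverage over all assignments. -/
open Finset

lemma count_uncovered {α : Type*} [DecidableEq α] (n k : ℕ) (Sets : Fin n → Finset α)
    (x : α) (i : Fin k) :
    ((univ : Finset (Fin n → Fin k)).filter
      (fun f => ∀ j, x ∈ Sets j → f j ≠ i)).card
    = (k-1) ^ ((univ.filter fun j => x ∈ Sets j).card) *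
      k ^ (n - (univ.filter fun j => x ∈ Sets j).card) := by
  have h1 : (univ : Finset (Fin n → Fin k)).filter (fun f => ∀ j, x ∈ Sets j → f j ≠ i)
      = Fintype.piFinset (fun j => if x ∈ Sets j then univ.erase i else univ) := by
    ext f
    simp only [mem_filter, mem_univ, true_and, Fintype.mem_piFinset]
    constructor
    · intro h j
      by_cases hj : x ∈ Sets j <;> simp [hj, h j]
    · intro h j hj
      have := h j
      simp [hj] at this
      exact this
  rw [h1, Fintype.card_piFinset]
  have h2 : ∀ j : Fin n, (if x ∈ Sets j then (univ : Finset (Fin k)).erase i else univ).card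
      = if x ∈ Sets j then k - 1 else k := by
    intro j; by_cases hj : x ∈ Sets j <;> simp [hj, card_erase_of_mem, card_univ]
  simp only [h2]
  rw [Finset.prod_ite, Finset.prod_const, Finset.prod_const]
  have h3 : (univ.filter fun j => ¬ x ∈ Sets j).card
      = n - (univ.filter fun j => x ∈ Sets j).card := by
    have := Finset.card_filter_add_card_filter_not (s := (univ : Finset (Fin n)))
      (p := fun j => x ∈ Sets j)
    simp only [card_univ, Fintype.card_fin] at this
    omega
  rw [h3]

lemma analytic_key (k d : ℕ) (hk : 1 ≤ k) :
    (1 - 1 / Real.exp 1) * (min d k : ℕ) ≤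
      (k : ℝ) * (1 - ((k - 1 : ℕ) : ℝ) ^ d / (k : ℝ) ^ d) := by
  have hk0 : (0:ℝ) < k := by exact_mod_cast hk
  have hr0 : (0:ℝ) ≤ ((k-1:ℕ):ℝ) / k := by positivity
  have hcast : ((k-1:ℕ):ℝ) = (k:ℝ) - 1 := by
    have : (1:ℕ) ≤ k := hk; push_cast [this]; ring
  have hre : ((k-1:ℕ):ℝ) / k ≤ Real.exp (-(1/k)) := by
    rw [hcast, sub_div, div_self hk0.ne']
    linarith [Real.add_one_le_exp (-(1/(k:ℝ)))]
  have hrpow : (((k-1:ℕ):ℝ) / k) ^ d ≤ Real.exp (-(d/(k:ℝ))) := by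
    calc (((k-1:ℕ):ℝ) / k) ^ d ≤ Real.exp (-(1/k)) ^ d := pow_le_pow_left₀ hr0 hre d
    _ = Real.exp (-(d/(k:ℝ))) := by
        rw [← Real.exp_nat_mul]; congr 1; field_simp
  have hratio : ((k-1:ℕ):ℝ) ^ d / (k:ℝ) ^ d = (((k-1:ℕ):ℝ) / k) ^ d := by
    rw [div_pow]
  rw [hratio]
  have hmain : (1 - 1 / Real.exp 1) * (min d k : ℕ) ≤
      (k:ℝ) * (1 - Real.exp (-(d/(k:ℝ)))) := by
    rcases le_or_gt d k with hd | hd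
    · rw [min_eq_left hd]
      set t : ℝ := (d:ℝ)/k with ht
      have ht0 : 0 ≤ t := by positivity
      have ht1 : t ≤ 1 := by
        rw [div_le_one hk0]; exact_mod_cast hd
      have hconv := convexOn_exp.2 (Set.mem_univ (0:ℝ)) (Set.mem_univ (-1:ℝ))
        (by linarith : (0:ℝ) ≤ 1 - t) ht0 (by ring)
      simp only [smul_eq_mul, mul_zero, mul_neg_one, zero_add, Real.exp_zero] at hconv
      simp only [Real.exp_neg] at hconv
      have hconv' : Real.exp (-t) ≤ 1 - t * (1 - 1/Real.exp 1) := by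
        rw [Real.exp_neg, one_div]
        linarith [hconv]
      have hstep : (k:ℝ) * (t * (1 - 1/Real.exp 1)) ≤ (k:ℝ) * (1 - Real.exp (-t)) := by
        apply mul_le_mul_of_nonneg_left _ (le_of_lt hk0)
        linarith
      have hkt : (k:ℝ) * t = d := by rw [ht]; field_simp
      calc (1 - 1/Real.exp 1) * (d:ℝ) = (k:ℝ) * (t * (1 - 1/Real.exp 1)) := by
            rw [← mul_assoc, hkt]; ring
        _ ≤ (k:ℝ) * (1 - Real.exp (-t)) := hstep
    · rw [min_eq_right (le_of_lt hd)]
      have h1 : Real.exp (-(d/(k:ℝ))) ≤ 1/Real.exp 1 := by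
        rw [Real.exp_neg, one_div]
        apply inv_anti₀ (Real.exp_pos 1)
        apply Real.exp_le_exp.2
        rw [le_div_iff₀ hk0, one_mul]
        exact_mod_cast le_of_lt hd
      nlinarith [mul_le_mul_of_nonneg_left h1 (le_of_lt hk0)]
  refine le_trans hmain ?_
  apply mul_le_mul_of_nonneg_left _ (le_of_lt hk0)
  linarith [hrpow]

lemma card_eq_sum_ind {α : Type*} [Fintype α] [DecidableEq α] (s : Finset α) :
    s.card = ∑ x : α, if x ∈ s then 1 else 0 := by
  rw [← Finset.card_filter]
  congr 1
  exact (Finset.filter_univ_mem s).symm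

lemma count_covered {α : Type*} [DecidableEq α] (n k : ℕ) (Sets : Fin n → Finset α)
    (x : α) (i : Fin k) :
    ((univ : Finset (Fin n → Fin k)).filter
      (fun f => ∃ j, f j = i ∧ x ∈ Sets j)).card
    = k^n - (k-1) ^ ((univ.filter fun j => x ∈ Sets j).card) *
      k ^ (n - (univ.filter fun j => x ∈ Sets j).card) := by
  have hun := count_uncovered n k Sets x i
  have hsplit := Finset.card_filter_add_card_filter_not
    (s := (univ : Finset (Fin n → Fin k))) (p := fun f => ∃ j, f j = i ∧ x ∈ Sets j)
  have hcongr : (univ : Finset (Fin n → Fin k)).filter (fun f => ¬ ∃ j, f j = i ∧ x ∈ Sets j)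
      = univ.filter (fun f => ∀ j, x ∈ Sets j → f j ≠ i) := by
    apply Finset.filter_congr
    intro f _
    constructor
    · intro h j hj hfi; exact h ⟨j, hfi, hj⟩
    · rintro h ⟨j, hfi, hj⟩; exact h j hj hfi
  rw [hcongr, hun] at hsplit
  have hcu : (univ : Finset (Fin n → Fin k)).card = k ^ n := by
    simp [card_univ]
  rw [hcu] at hsplit
  exact Nat.eq_sub_of_add_eq hsplit

lemma cov_le_sum_min {α : Type*} [Fintype α] [DecidableEq α] (n k : ℕ)
    (Sets : Fin n → Finset α) (f : Fin n → Fin k) :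
    ∑ i : Fin k, ((univ.filter fun j => f j = i).biUnion Sets).card
      ≤ ∑ x : α, min ((univ.filter fun j => x ∈ Sets j).card) k := by
  have h1 : ∀ i : Fin k, ((univ.filter fun j => f j = i).biUnion Sets).card
      = ∑ x : α, if ∃ j, f j = i ∧ x ∈ Sets j then 1 else 0 := by
    intro i
    rw [card_eq_sum_ind]
    congr 1; ext x
    congr 1
    simp only [Finset.mem_biUnion, mem_filter, mem_univ, true_and, eq_iff_iff]
  simp only [h1]
  rw [Finset.sum_comm]
  apply Finset.sum_le_sum
  intro x _
  rw [← Finset.card_filter]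
  have hsub : (univ.filter fun i : Fin k => ∃ j, f j = i ∧ x ∈ Sets j)
      ⊆ (univ.filter fun j => x ∈ Sets j).image f := by
    intro i hi
    simp only [mem_filter, mem_univ, true_and] at hi
    obtain ⟨j, hj1, hj2⟩ := hi
    exact Finset.mem_image.2 ⟨j, by simp [hj2], hj1⟩
  apply le_min
  · exact le_trans (Finset.card_le_card hsub) (Finset.card_image_le)
  · exact le_trans (Finset.card_filter_le _ _) (by simp)

lemma expected_eq {α : Type*} [Fintype α] [DecidableEq α] (n k : ℕ)
    (Sets : Fin n → Finset α) :
    ∑ f : Fin n → Fin k, ∑ i : Fin k, ((univ.filter fun j => f j = i).biUnion Sets).card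
    = ∑ x : α, k * (k^n - (k-1) ^ ((univ.filter fun j => x ∈ Sets j).card) *
        k ^ (n - (univ.filter fun j => x ∈ Sets j).card)) := by
  have h1 : ∀ (f : Fin n → Fin k) (i : Fin k),
      ((univ.filter fun j => f j = i).biUnion Sets).card
      = ∑ x : α, if ∃ j, f j = i ∧ x ∈ Sets j then 1 else 0 := by
    intro f i
    rw [card_eq_sum_ind]
    congr 1; ext x
    congr 1
    simp only [Finset.mem_biUnion, mem_filter, mem_univ, true_and, eq_iff_iff]
  simp only [h1]
  rw [Finset.sum_comm]
  have h2 : ∀ i : Fin k, ∑ f : Fin n → Fin k, ∑ x : α,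
      (if ∃ j, f j = i ∧ x ∈ Sets j then 1 else 0)
      = ∑ x : α, (k^n - (k-1) ^ ((univ.filter fun j => x ∈ Sets j).card) *
        k ^ (n - (univ.filter fun j => x ∈ Sets j).card)) := by
    intro i
    rw [Finset.sum_comm]
    congr 1; ext x
    rw [← Finset.card_filter]
    exact count_covered n k Sets x i
  simp only [h2]
  rw [Finset.sum_comm]
  congr 1; ext x
  rw [Finset.sum_const, card_univ, Fintype.card_fin, smul_eq_mul]


/-- SET K-COVER, randomized algorithm: under the uniform random assignment of the `n`
subsets to `k` covers, the expected total coverage is at least `(1 - 1/e) * OPT`. -/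
theorem randomized_expected_coverage (α : Type*) [Fintype α] [DecidableEq α]
    (n k : ℕ) (hk : 1 ≤ k) (Sets : Fin n → Finset α) :
    (∑ f : Fin n → Fin k,
        ((∑ i : Fin k, ((univ.filter fun j => f j = i).biUnion Sets).card : ℕ) : ℝ)) /
        ((k : ℝ) ^ n)
      ≥ (1 - 1 / Real.exp 1) *
        ((univ.sup fun f : Fin n → Fin k =>
          ∑ i : Fin k, ((univ.filter fun j => f j = i).biUnion Sets).card : ℕ) : ℝ) := by
  classical
  set d : α → ℕ := fun x => (univ.filter fun j => x ∈ Sets j).card with hd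
  have hk0 : (0:ℝ) < (k:ℝ) := by exact_mod_cast hk
  have hkn0 : (0:ℝ) < (k:ℝ)^n := by positivity
  have hdn : ∀ x : α, d x ≤ n := by
    intro x
    exact le_trans (Finset.card_filter_le _ _) (by simp)
  have hle : ∀ x : α, (k-1) ^ (d x) * k ^ (n - d x) ≤ k ^ n := by
    intro x
    calc (k-1) ^ (d x) * k ^ (n - d x) ≤ k ^ (d x) * k ^ (n - d x) :=
          Nat.mul_le_mul_right _ (Nat.pow_le_pow_left (Nat.sub_le k 1) _)
      _ = k ^ n := by rw [← pow_add, Nat.add_sub_cancel' (hdn x)]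
  have hfrac : ∀ x : α, ((k-1:ℕ):ℝ) ^ (d x) * (k:ℝ) ^ (n - d x) / (k:ℝ)^n
      = ((k-1:ℕ):ℝ) ^ (d x) / (k:ℝ) ^ (d x) := by
    intro x
    rw [div_eq_div_iff hkn0.ne' (by positivity), mul_assoc]
    congr 1
    rw [← pow_add, Nat.sub_add_cancel (hdn x)]
  have hLHS : (∑ f : Fin n → Fin k,
        ((∑ i : Fin k, ((univ.filter fun j => f j = i).biUnion Sets).card : ℕ) : ℝ)) /
        ((k : ℝ) ^ n)
      = ∑ x : α, (k:ℝ) * (1 - ((k-1:ℕ):ℝ) ^ (d x) / (k:ℝ) ^ (d x)) := by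
    have h1 : (∑ f : Fin n → Fin k,
        ((∑ i : Fin k, ((univ.filter fun j => f j = i).biUnion Sets).card : ℕ) : ℝ))
        = ((∑ f : Fin n → Fin k,
            ∑ i : Fin k, ((univ.filter fun j => f j = i).biUnion Sets).card : ℕ) : ℝ) := by
      push_cast; rfl
    rw [h1, expected_eq n k Sets]
    rw [Nat.cast_sum, Finset.sum_div]
    apply Finset.sum_congr rfl
    intro x _
    rw [Nat.cast_mul, Nat.cast_sub (hle x), Nat.cast_mul, Nat.cast_pow, Nat.cast_pow,
      Nat.cast_pow, mul_div_assoc, sub_div, div_self hkn0.ne', hfrac x]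
  rw [hLHS, ge_iff_le]
  have hOPT : ((univ.sup fun f : Fin n → Fin k =>
        ∑ i : Fin k, ((univ.filter fun j => f j = i).biUnion Sets).card : ℕ) : ℝ)
      ≤ ((∑ x : α, min (d x) k : ℕ) : ℝ) := by
    exact_mod_cast Finset.sup_le (fun f _ => cov_le_sum_min n k Sets f)
  have he : (0:ℝ) ≤ 1 - 1/Real.exp 1 := by
    have h1 : (1:ℝ) ≤ Real.exp 1 := Real.one_le_exp (by norm_num)
    have h2 : 1/Real.exp 1 ≤ 1 := by
      rw [div_le_one (Real.exp_pos 1)]; exact h1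
    linarith
  calc (1 - 1/Real.exp 1) * ((univ.sup fun f : Fin n → Fin k =>
        ∑ i : Fin k, ((univ.filter fun j => f j = i).biUnion Sets).card : ℕ) : ℝ)
      ≤ (1 - 1/Real.exp 1) * ((∑ x : α, min (d x) k : ℕ) : ℝ) :=
        mul_le_mul_of_nonneg_left hOPT he
    _ = ∑ x : α, (1 - 1/Real.exp 1) * ((min (d x) k : ℕ) : ℝ) := by
        rw [Nat.cast_sum, Finset.mul_sum]
    _ ≤ ∑ x : α, (k:ℝ) * (1 - ((k-1:ℕ):ℝ) ^ (d x) / (k:ℝ) ^ (d x)) :=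
        Finset.sum_le_sum (fun x _ => analytic_key k (d x) hk)
end

section
/- Under the uniform random assignment of the n subsets to k covers, for every element v ∈ S the expected number of covers containing v equals k - k(1 - 1/k)^{N_v}, where N_v is the number of subsets S_j that contain v. -/
open Finset

/-- SET K-COVER: under the uniform random assignment of the `n` subsets to `k` covers,
for every element `v` the expected number of covers containing `v` equals
`k - k * (1 - 1/k) ^ N_v`, where `N_v` is the number of subsets containing `v`. -/
theorem randomized_expected_element_coverage (α : Type*) [Fintype α] [DecidableEq α]
    (n k : ℕ) (hk : 1 ≤ k) (Sets : Fin n → Finset α) (v : α) :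
    (∑ f : Fin n → Fin k,
        (((univ.filter fun i : Fin k => ∃ j, f j = i ∧ v ∈ Sets j).card : ℕ) : ℝ)) /
        ((k : ℝ) ^ n)
      = (k : ℝ) - (k : ℝ) * (1 - 1 / (k : ℝ)) ^ ((univ.filter fun j => v ∈ Sets j).card) := by
  classical
  set N := (univ.filter fun j => v ∈ Sets j).card with hN
  have hNn : N ≤ n := by
    calc N ≤ (univ : Finset (Fin n)).card := card_filter_le _ _
    _ = n := by simp
  have hkR : (k : ℝ) ≠ 0 := by positivity
  -- counting lemma: for fixed i, the number of f avoiding i on sets containing v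
  have hcount : ∀ i : Fin k,
      (univ.filter fun f : Fin n → Fin k => ∀ j, v ∈ Sets j → f j ≠ i).card
        = (k-1)^N * k^(n-N) := by
    intro i
    have hset : (univ.filter fun f : Fin n → Fin k => ∀ j, v ∈ Sets j → f j ≠ i)
        = Fintype.piFinset (fun j => if v ∈ Sets j then ((univ : Finset (Fin k)).erase i) else univ) := by
      ext f
      simp only [mem_filter, mem_univ, true_and, Fintype.mem_piFinset]
      constructor
      · intro h j
        by_cases hj : v ∈ Sets j <;> simp [hj, h j]
      · intro h j hj
        have := h j
        simp [hj] at this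
        exact this
    rw [hset, Fintype.card_piFinset]
    have : ∀ j : Fin n,
        (if v ∈ Sets j then ((univ : Finset (Fin k)).erase i) else univ).card
          = if v ∈ Sets j then k - 1 else k := by
      intro j
      by_cases hj : v ∈ Sets j <;> simp [hj, card_erase_of_mem]
    simp only [this]
    rw [Finset.prod_ite, Finset.prod_const, Finset.prod_const]
    have hcomp : (univ.filter fun x : Fin n => v ∉ Sets x).card = n - N := by
      have h2 := Finset.card_filter_add_card_filter_not
        (s := (univ : Finset (Fin n))) (p := fun j => v ∈ Sets j)
      simp only [Finset.card_univ, Fintype.card_fin] at h2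
      rw [hN]
      omega
    rw [hcomp, ← hN]
  -- per-f complement identity
  have hsplit : ∀ f : Fin n → Fin k,
      (univ.filter fun i : Fin k => ∃ j, f j = i ∧ v ∈ Sets j).card
        + (univ.filter fun i : Fin k => ∀ j, v ∈ Sets j → f j ≠ i).card = k := by
    intro f
    have h1 : (univ.filter fun i : Fin k => ∀ j, v ∈ Sets j → f j ≠ i)
        = (univ.filter fun i : Fin k => ¬ ∃ j, f j = i ∧ v ∈ Sets j) := by
      ext i
      simp only [mem_filter, mem_univ, true_and]
      constructor
      · rintro h ⟨j, hj1, hj2⟩; exact h j hj2 hj1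
      · intro h j hj hfj; exact h ⟨j, hfj, hj⟩
    rw [h1]
    have := Finset.card_filter_add_card_filter_not
      (s := (univ : Finset (Fin k))) (p := fun i => ∃ j, f j = i ∧ v ∈ Sets j)
    simpa using this
  -- swap the double sum
  have hswap : ∑ f : Fin n → Fin k,
      (univ.filter fun i : Fin k => ∀ j, v ∈ Sets j → f j ≠ i).card
        = k * ((k-1)^N * k^(n-N)) := by
    have : ∀ f : Fin n → Fin k,
        (univ.filter fun i : Fin k => ∀ j, v ∈ Sets j → f j ≠ i).card
          = ∑ i : Fin k, if (∀ j, v ∈ Sets j → f j ≠ i) then 1 else 0 := by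
      intro f; rw [Finset.card_filter]
    simp only [this]
    rw [Finset.sum_comm]
    have : ∀ i : Fin k,
        (∑ f : Fin n → Fin k, if (∀ j, v ∈ Sets j → f j ≠ i) then 1 else 0)
          = (k-1)^N * k^(n-N) := by
      intro i
      rw [← Finset.card_filter]
      exact hcount i
    simp only [this]
    rw [Finset.sum_const]
    simp [mul_comm]
  -- total numerator in ℕ
  have hnum : ∑ f : Fin n → Fin k,
      (univ.filter fun i : Fin k => ∃ j, f j = i ∧ v ∈ Sets j).card
        = k^n * k - k * ((k-1)^N * k^(n-N)) := by
    have h1 : (∑ f : Fin n → Fin k,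
        (univ.filter fun i : Fin k => ∃ j, f j = i ∧ v ∈ Sets j).card)
        + (∑ f : Fin n → Fin k,
        (univ.filter fun i : Fin k => ∀ j, v ∈ Sets j → f j ≠ i).card)
        = k^n * k := by
      rw [← Finset.sum_add_distrib]
      simp only [hsplit]
      rw [Finset.sum_const]
      simp [Fintype.card_fun, mul_comm]
    rw [hswap] at h1
    exact Nat.eq_sub_of_add_eq h1
  -- now cast to ℝ
  have hknN : k^N * k^(n-N) = k^n := by rw [← pow_add, Nat.add_sub_cancel' hNn]
  have hle : k * ((k-1)^N * k^(n-N)) ≤ k^n * k := by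
    have h1 : (k-1)^N ≤ k^N := Nat.pow_le_pow_left (Nat.sub_le k 1) N
    calc k * ((k-1)^N * k^(n-N)) ≤ k * (k^N * k^(n-N)) := by
          exact Nat.mul_le_mul_left k (Nat.mul_le_mul_right _ h1)
      _ = k^n * k := by rw [hknN]; ring
  have hk1 : ((k - 1 : ℕ) : ℝ) = (k : ℝ) - 1 := by
    push_cast [hk]; ring
  have hnumR : (∑ f : Fin n → Fin k,
      (((univ.filter fun i : Fin k => ∃ j, f j = i ∧ v ∈ Sets j).card : ℕ) : ℝ))
      = (k:ℝ)^n * k - k * (((k:ℝ) - 1)^N * (k:ℝ)^(n-N)) := by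
    rw [← Nat.cast_sum, hnum, Nat.cast_sub hle]
    push_cast [hk1]
    ring
  rw [hnumR]
  have hkn : ((k:ℝ))^n = (k:ℝ)^N * (k:ℝ)^(n-N) := by
    rw [← pow_add, Nat.add_sub_cancel' hNn]
  rw [div_eq_iff (by positivity : ((k:ℝ))^n ≠ 0)]
  have h1k : (1 - 1/(k:ℝ)) = ((k:ℝ) - 1)/(k:ℝ) := by
    field_simp
  rw [h1k, div_pow, hkn]
  have hkN : ((k:ℝ))^N ≠ 0 := by positivity
  field_simp
end

section
/- Under the uniform random assignment of the n subsets to k covers, for every element v ∈ S the expected number of covers containing v satisfies E[l_v(f)] ≥ (1 - 1/e) · min(k, N_v). -/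
/-!
A fixed cover misses `v` exactly when none of the `N_v` sets containing `v` is assigned to it,
which happens for a `(1 - 1/k) ^ N_v` fraction of the assignments; summing over the `k` covers
gives `E[l_v] = k (1 - (1 - 1/k) ^ N_v)`. Since `(1 - 1/k) ^ N ≤ e^(-N/k)` and the concave
function `t ↦ 1 - e^(-t)` lies above its chord `(1 - 1/e) t` on `[0, 1]`, this is at least
`(1 - 1/e) min(k, N_v)`.
-/

open Finset

namespace Real

theorem one_sub_pow_le_exp_neg_mul {x : ℝ} (hx : x ≤ 1) (N : ℕ) :
    (1 - x) ^ N ≤ exp (-(N * x)) := by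
  calc (1 - x) ^ N ≤ exp (-x) ^ N := pow_le_pow_left₀ (sub_nonneg.2 hx) (one_sub_le_exp_neg x) N
    _ = exp (-(N * x)) := by rw [← exp_nat_mul, mul_neg]

theorem one_sub_exp_neg_one_mul_min_le {t : ℝ} (ht : 0 ≤ t) :
    (1 - exp (-1)) * min 1 t ≤ 1 - exp (-t) := by
  rcases le_total t 1 with ht1 | ht1
  · rw [min_eq_right ht1]
    have hchord := convexOn_exp.2 (Set.mem_univ 0) (Set.mem_univ (-1)) (sub_nonneg.2 ht1) ht
      (sub_add_cancel 1 t)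
    simp only [smul_eq_mul, mul_zero, zero_add, exp_zero, mul_one, mul_neg] at hchord
    linarith
  · rw [min_eq_left ht1]
    linarith [exp_le_exp.2 (neg_le_neg ht1)]

theorem one_sub_exp_neg_one_mul_min_le_mul_one_sub_inv_pow {k : ℝ} (hk : 1 ≤ k) (N : ℕ) :
    (1 - exp (-1)) * min k N ≤ k * (1 - (1 - k⁻¹) ^ N) := by
  have hk0 : 0 < k := by linarith
  calc (1 - exp (-1)) * min k N = k * ((1 - exp (-1)) * min 1 (N / k)) := by
        rw [mul_left_comm, mul_min_of_nonneg _ _ hk0.le, mul_one, mul_div_cancel₀ _ hk0.ne']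
    _ ≤ k * (1 - exp (-(N / k))) :=
        mul_le_mul_of_nonneg_left (one_sub_exp_neg_one_mul_min_le (by positivity)) hk0.le
    _ ≤ k * (1 - (1 - k⁻¹) ^ N) := by
        gcongr
        simpa [div_eq_mul_inv] using one_sub_pow_le_exp_neg_mul (inv_le_one_of_one_le₀ hk) N

end Real

namespace Finset

variable {ι κ : Type*} [Fintype ι] [DecidableEq ι] [Fintype κ] [DecidableEq κ]

theorem card_filter_notMem_image (s : Finset ι) (i : κ) :
    #{f : ι → κ | i ∉ s.image f} = (Fintype.card κ - 1) ^ #s * Fintype.card κ ^ #sᶜ := by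
  have hpi : ({f : ι → κ | i ∉ s.image f} : Finset (ι → κ)) =
      Fintype.piFinset fun j => if j ∈ s then univ.erase i else univ := by
    ext f
    simp only [mem_filter, mem_univ, true_and, mem_image, not_exists, not_and,
      Fintype.mem_piFinset]
    refine forall_congr' fun j => ?_
    split_ifs with hj <;> simp [hj]
  rw [hpi, Fintype.card_piFinset]
  simp [apply_ite, prod_ite, card_univ, filter_notMem_eq_sdiff, ← compl_eq_univ_sdiff]

theorem sum_card_image_div_card_pow [Nonempty κ] (s : Finset ι) :
    (∑ f : ι → κ, (#(s.image f) : ℝ)) / (Fintype.card κ : ℝ) ^ Fintype.card ι =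
      Fintype.card κ * (1 - (1 - (Fintype.card κ : ℝ)⁻¹) ^ #s) := by
  set k := Fintype.card κ
  have hk : 0 < k := Fintype.card_pos
  have hdouble : ∑ f : ι → κ, #(s.image f) = ∑ i : κ, #{f : ι → κ | i ∈ s.image f} := by
    convert sum_card_bipartiteAbove_eq_sum_card_bipartiteBelow (s := univ) (t := univ)
      fun (f : ι → κ) i => i ∈ s.image f using 3 <;>
    ext <;> simp [bipartiteAbove, bipartiteBelow]
  have hhit (i : κ) :
      (#{f : ι → κ | i ∈ s.image f} : ℝ) = k ^ #s * k ^ #sᶜ - (k - 1) ^ #s * k ^ #sᶜ := by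
    have hsplit := card_filter_add_card_filter_not (s := univ) (p := fun f : ι → κ => i ∈ s.image f)
    rw [card_filter_notMem_image, card_univ, Fintype.card_fun, ← card_add_card_compl s,
      pow_add] at hsplit
    rw [eq_sub_iff_add_eq, ← Nat.cast_pred hk]
    exact_mod_cast hsplit
  rw [← Nat.cast_sum, hdouble, Nat.cast_sum, sum_congr rfl fun i _ => hhit i, sum_const,
    card_univ, nsmul_eq_mul, ← card_add_card_compl s, pow_add]
  have hk' : (k : ℝ) ≠ 0 := by positivity
  rw [show 1 - (k : ℝ)⁻¹ = (k - 1) / k by field_simp, div_pow]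
  field_simp
  rfl

end Finset

theorem randomized_expected_element_coverage_ge_general (α : Type*) [DecidableEq α]
    (n k : ℕ) (hk : 1 ≤ k) (Sets : Fin n → Finset α) (v : α) :
    (∑ f : Fin n → Fin k,
        (((univ.filter fun i : Fin k => ∃ j, f j = i ∧ v ∈ Sets j).card : ℕ) : ℝ)) /
        ((k : ℝ) ^ n)
      ≥ (1 - 1 / Real.exp 1) *
          ((min k ((univ.filter fun j => v ∈ Sets j).card) : ℕ) : ℝ) := by
  have : NeZero k := ⟨by omega⟩
  have hcovered (f : Fin n → Fin k) :
      univ.filter (fun i => ∃ j, f j = i ∧ v ∈ Sets j) = (univ.filter (v ∈ Sets ·)).image f := by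
    ext i
    simp [and_comm]
  have hexpected := sum_card_image_div_card_pow (κ := Fin k) (univ.filter (v ∈ Sets ·))
  simp only [Fintype.card_fin] at hexpected
  simp_rw [hcovered, hexpected, one_div, ← Real.exp_neg, Nat.cast_min]
  exact Real.one_sub_exp_neg_one_mul_min_le_mul_one_sub_inv_pow (by exact_mod_cast hk) _

/-- SET K-COVER: under the uniform random assignment of the `n` subsets to `k` covers,
for every element `v` the expected number of covers containing `v` is at least
`(1 - 1/e) * min (k, N_v)`, where `N_v` is the number of subsets containing `v`. -/
theorem randomized_expected_element_coverage_ge (α : Type*) [Fintype α] [DecidableEq α]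
    (n k : ℕ) (hk : 1 ≤ k) (Sets : Fin n → Finset α) (v : α) :
    (∑ f : Fin n → Fin k,
        (((univ.filter fun i : Fin k => ∃ j, f j = i ∧ v ∈ Sets j).card : ℕ) : ℝ)) /
        ((k : ℝ) ^ n)
      ≥ (1 - 1 / Real.exp 1) *
          ((min k ((univ.filter fun j => v ∈ Sets j).card) : ℕ) : ℝ) :=
  randomized_expected_element_coverage_ge_general α n k hk Sets v
end

section
/- For every real number q with 0 < q < 1, the function x ↦ (1 - q^x)/x is strictly decreasing on the interval (0, ∞) of real numbers. -/
/-! `(1 - q ^ x) / x` is minus the slope of the secant of `x ↦ q ^ x` between `0` and `x`.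
Since `q ^ x = exp (x log q)` with `log q ≠ 0`, this function is strictly convex, so its secant
slopes from a fixed point are strictly increasing. -/

open Real Set

theorem strictConvexOn_rpow_left {b : ℝ} (hb₀ : 0 < b) (hb₁ : b ≠ 1) :
    StrictConvexOn ℝ univ fun x : ℝ => b ^ x := by
  refine ⟨convex_univ, fun x _ y _ hxy s t hs ht hst => ?_⟩
  have hlog : log b ≠ 0 := log_ne_zero_of_pos_of_ne_one hb₀ hb₁
  have hexp := strictConvexOn_exp.2 (mem_univ (log b * x)) (mem_univ (log b * y))
    (by simpa [hlog] using hxy) hs ht hst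
  simp only [smul_eq_mul, rpow_def_of_pos hb₀] at hexp ⊢
  convert hexp using 2
  ring

theorem StrictConvexOn.strictAntiOn_sub_div {s : Set ℝ} {f : ℝ → ℝ} (hf : StrictConvexOn ℝ s f)
    (h₀ : 0 ∈ s) : StrictAntiOn (fun x => (f 0 - f x) / x) (s ∩ Ioi 0) := by
  intro x hx y hy hxy
  have hslope := hf.secant_strict_mono h₀ hx.1 hy.1 hx.2.ne' hy.2.ne' hxy
  simp only [sub_zero] at hslope
  simpa only [← neg_sub (f _) (f 0), neg_div, neg_lt_neg_iff] using hslope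

/-- For every real `q` with `0 < q < 1`, the function `x ↦ (1 - q^x) / x` is strictly
decreasing on `(0, ∞)`. -/
theorem strictAntiOn_one_sub_rpow_div (q : ℝ) (hq0 : 0 < q) (hq1 : q < 1) :
    StrictAntiOn (fun x : ℝ => (1 - q ^ x) / x) (Set.Ioi 0) := by
  have h := (strictConvexOn_rpow_left hq0 hq1.ne).strictAntiOn_sub_div (mem_univ 0)
  simpa only [rpow_zero, univ_inter] using h
end

section
/- For all natural numbers k ≥ 1 and N ≥ 1, the real number k - k(1 - 1/k)^N satisfies k - k(1 - 1/k)^N ≥ (1 - 1/e) · min(k, N). -/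
lemma exp_neg_le_aux (x : ℝ) (h0 : 0 ≤ x) (h1 : x ≤ 1) :
    Real.exp (-x) ≤ 1 - (1 - Real.exp (-1)) * x := by
  have h := convexOn_exp.2 (Set.mem_univ (-1)) (Set.mem_univ (0:ℝ)) h0 (by linarith)
    (by ring : x + (1 - x) = 1)
  simp only [smul_eq_mul, mul_zero, add_zero, mul_neg, mul_one, Real.exp_zero] at h
  nlinarith [h]

/-- For natural numbers `k ≥ 1` and `N ≥ 1`,
`k - k * (1 - 1/k)^N ≥ (1 - 1/e) * min k N` (in the real numbers). -/
theorem coverage_ge_one_sub_inv_exp_mul_min (k N : ℕ) (hk : 1 ≤ k) (hN : 1 ≤ N) :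
    (k : ℝ) - (k : ℝ) * (1 - 1 / (k : ℝ)) ^ N ≥ (1 - 1 / Real.exp 1) * min (k : ℝ) (N : ℝ) := by
  have hk1 : (1:ℝ) ≤ k := by exact_mod_cast hk
  have hkpos : (0:ℝ) < k := by linarith
  set t : ℝ := 1 - 1/(k:ℝ) with ht
  have hfrac : (1:ℝ)/k ≤ 1 := by rw [div_le_one hkpos]; exact hk1
  have ht0 : 0 ≤ t := by simp only [ht]; linarith
  have hte : t ≤ Real.exp (-(1/k)) := by
    have := Real.add_one_le_exp (-(1/(k:ℝ)))
    simp only [ht]; linarith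
  have hexp1 : Real.exp (-1) = 1 / Real.exp 1 := by
    rw [Real.exp_neg]; rw [one_div]
  rcases le_total (N:ℝ) (k:ℝ) with hNk | hkN
  · rw [min_eq_right hNk]
    have htN : t ^ N ≤ Real.exp (-((N:ℝ)/k)) := by
      calc t ^ N ≤ (Real.exp (-(1/k))) ^ N := pow_le_pow_left₀ ht0 hte N
        _ = Real.exp ((N:ℝ) * -(1/k)) := by rw [← Real.exp_nat_mul]
        _ = Real.exp (-((N:ℝ)/k)) := by ring_nf
    have hx0 : (0:ℝ) ≤ (N:ℝ)/k := by positivity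
    have hx1 : (N:ℝ)/k ≤ 1 := by rw [div_le_one hkpos]; exact hNk
    have key : t ^ N ≤ 1 - (1 - Real.exp (-1)) * ((N:ℝ)/k) :=
      le_trans htN (exp_neg_le_aux _ hx0 hx1)
    have hmul : (k:ℝ) * ((N:ℝ)/k) = N := mul_div_cancel₀ _ hkpos.ne'
    have h2 := mul_le_mul_of_nonneg_left key hkpos.le
    have h3 : (k:ℝ) * (1 - (1 - Real.exp (-1)) * ((N:ℝ)/k)) = k - (1 - Real.exp (-1)) * N := by
      field_simp
    rw [ge_iff_le, ← hexp1]
    rw [h3] at h2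
    linarith
  · rw [min_eq_left hkN]
    have hNatk : k ≤ N := by exact_mod_cast hkN
    have htN : t ^ N ≤ Real.exp (-1) := by
      calc t ^ N ≤ t ^ k := pow_le_pow_of_le_one ht0 (by simp only [ht]; linarith [one_div_pos.mpr hkpos]) hNatk
        _ ≤ (Real.exp (-(1/k))) ^ k := pow_le_pow_left₀ ht0 hte k
        _ = Real.exp ((k:ℝ) * -(1/k)) := by rw [← Real.exp_nat_mul]
        _ = Real.exp (-1) := by rw [mul_neg, mul_one_div, div_self hkpos.ne']
    rw [ge_iff_le, ← hexp1]
    nlinarith [htN]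
end

section
/- Assume every element of S belongs to at least one subset, |S| ≤ n, and n ≥ 2. Let l* = max over all assignments f of (min over v ∈ S of l_v(f)). Then under the uniform random assignment, with probability greater than 1 - 1/n, every element v ∈ S satisfies l_v(f) ≥ l*/(24 ln n). -/
open Finset
open scoped Classical
open scoped Nat

set_option maxHeartbeats 1600000

lemma aux_pow_self_le (m : ℕ) : (m : ℝ) ^ m ≤ Real.exp m * (m ! : ℝ) := by
  have h1 : (m:ℝ)^m / (m ! : ℝ) ≤ Real.exp m := by
    refine le_trans ?_ (Real.sum_le_exp_of_nonneg (by positivity) (m+1))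
    exact Finset.single_le_sum (f := fun i => (m:ℝ)^i / (i ! : ℝ))
      (fun i _ => by positivity) (Finset.self_mem_range_succ m)
  have h2 : (0:ℝ) < (m ! : ℝ) := by exact_mod_cast m.factorial_pos
  calc (m:ℝ)^m = (m:ℝ)^m / (m ! : ℝ) * (m ! : ℝ) := by field_simp
    _ ≤ Real.exp m * (m ! : ℝ) := by nlinarith

/-- SET K-COVER: assume every element belongs to at least one subset, `|S| ≤ n` and
`n ≥ 2`.  Let `l* = max_f min_v l_v(f)`.  Then under the uniform random assignment,
with probability greater than `1 - 1/n`, every element `v` satisfies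
`l_v(f) ≥ l* / (24 ln n)`. -/
theorem randomized_min_coverage_whp (α : Type*) [Fintype α] [DecidableEq α] [Nonempty α]
    (n k : ℕ) (hk : 1 ≤ k) (Sets : Fin n → Finset α)
    (hcov : ∀ v : α, ∃ j : Fin n, v ∈ Sets j)
    (hcard : Fintype.card α ≤ n) (hn : 2 ≤ n)
    (lv : (Fin n → Fin k) → α → ℕ)
    (hlv : ∀ f v, lv f v = (univ.filter fun i : Fin k => ∃ j, f j = i ∧ v ∈ Sets j).card)
    (lstar : ℕ)
    (hlstar : lstar = univ.sup fun g : Fin n → Fin k => univ.inf' univ_nonempty (lv g)) :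
    ((univ.filter fun f : Fin n → Fin k =>
        ∀ v : α, (lstar : ℝ) / (24 * Real.log n) ≤ (lv f v : ℝ)).card : ℝ) / ((k : ℝ) ^ n)
      > 1 - 1 / (n : ℝ) := by
  have hn0 : (0:ℝ) < n := by positivity
  have hn1 : (1:ℝ) < n := by exact_mod_cast hn
  have hnn : (0:ℝ) < (n:ℝ) := hn0
  have hc : 0 < Real.log n := Real.log_pos hn1
  have hkR : (0:ℝ) < (k:ℝ) := by exact_mod_cast hk
  have hkn : (0:ℝ) < (k:ℝ)^n := by positivity
  set t : ℝ := (lstar : ℝ) / (24 * Real.log n) with ht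
  have hlv1 : ∀ (f : Fin n → Fin k) (v : α), 1 ≤ lv f v := by
    intro f v
    rw [hlv]
    obtain ⟨j, hj⟩ := hcov v
    refine Finset.card_pos.mpr ⟨f j, ?_⟩
    simp only [mem_filter, mem_univ, true_and]
    exact ⟨j, rfl, hj⟩
  set Q := univ.filter (fun f : Fin n → Fin k => ∃ v : α, (lv f v : ℝ) < t) with hQdef
  have hcardfun : (univ : Finset (Fin n → Fin k)).card = k ^ n := by
    simp [card_univ]
  -- key bound
  have key : (Q.card : ℝ) < (k:ℝ)^n / n := by
    by_cases hcase : t ≤ 1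
    · have hQe : Q = ∅ := by
        rw [hQdef, Finset.filter_eq_empty_iff]
        intro f _
        push_neg
        intro v
        have := hlv1 f v
        have : (1:ℝ) ≤ (lv f v : ℝ) := by exact_mod_cast this
        linarith
      rw [hQe]
      simpa using div_pos hkn hn0
    · push_neg at hcase
      have hLc : 24 * Real.log n < (lstar : ℝ) := by
        rw [ht, lt_div_iff₀ (by positivity)] at hcase
        linarith
      have hlog2 : (2:ℝ)/3 < Real.log 2 := by
        have := Real.log_two_gt_d9; linarith
      have hlogn2 : Real.log 2 ≤ Real.log n :=
        Real.log_le_log (by norm_num) (by exact_mod_cast hn)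
      have h16 : (16:ℝ) < 24 * Real.log n := by nlinarith
      -- the optimal assignment g
      obtain ⟨g, -, hgsup⟩ := Finset.exists_mem_eq_sup (univ : Finset (Fin n → Fin k))
        ⟨fun _ => ⟨0, hk⟩, mem_univ _⟩ (fun g => univ.inf' univ_nonempty (lv g))
      have hgL : ∀ v : α, lstar ≤ lv g v := by
        intro v
        rw [hlstar, hgsup]
        exact Finset.inf'_le _ (mem_univ v)
      set D : α → Finset (Fin n) := fun v => univ.filter (fun j => v ∈ Sets j) with hD
      have hdL : ∀ v : α, lstar ≤ (D v).card := by
        intro v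
        refine le_trans (hgL v) ?_
        rw [hlv]
        refine le_trans (Finset.card_le_card ?_) (Finset.card_image_le (s := D v) (f := g))
        intro i hi
        simp only [mem_filter, mem_univ, true_and] at hi
        obtain ⟨j, hji, hjv⟩ := hi
        exact Finset.mem_image.mpr ⟨j, by simp [hD, hjv], hji⟩
      have hdn : ∀ v : α, (D v).card ≤ n := by
        intro v
        simpa using Finset.card_filter_le (univ : Finset (Fin n)) _
      have hLk : lstar ≤ k := by
        obtain ⟨v⟩ := ‹Nonempty α›
        refine (hgL v).trans ?_
        rw [hlv]
        simpa using Finset.card_filter_le (univ : Finset (Fin k)) _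
      set m := ⌊t⌋₊ with hm
      have hm1 : 1 ≤ m := Nat.le_floor (by exact_mod_cast hcase.le)
      have hmt : (m:ℝ) ≤ t := Nat.floor_le (by positivity)
      have htL : t ≤ (lstar:ℝ) := by
        rw [ht]
        exact div_le_self (by positivity) (by linarith)
      have hmL : m ≤ lstar := by exact_mod_cast le_trans hmt htL
      have hmk : m ≤ k := le_trans hmL hLk
      have hmM : (0:ℝ) < (m:ℝ) := by exact_mod_cast hm1
      -- counting bound for each v
      have hcount : ∀ v : α, (univ.filter fun f : Fin n → Fin k => lv f v ≤ m).card
          ≤ k.choose m * (m ^ (D v).card * k ^ (n - (D v).card)) := by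
        intro v
        have hsub : (univ.filter fun f : Fin n → Fin k => lv f v ≤ m) ⊆
            (powersetCard m (univ : Finset (Fin k))).biUnion
              (fun T => Fintype.piFinset (fun j => if v ∈ Sets j then T else univ)) := by
          intro f hf
          simp only [mem_filter, mem_univ, true_and] at hf
          have hU : (univ.filter fun i : Fin k => ∃ j, f j = i ∧ v ∈ Sets j).card ≤ m := by
            rw [← hlv]; exact hf
          obtain ⟨T, hUT, hTcard⟩ := Finset.exists_superset_card_eq hU
            (by simpa using hmk)
          refine Finset.mem_biUnion.mpr ⟨T, ?_, ?_⟩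
          · exact Finset.mem_powersetCard.mpr ⟨Finset.subset_univ T, hTcard⟩
          · rw [Fintype.mem_piFinset]
            intro j
            by_cases hv : v ∈ Sets j
            · simp only [hv, if_true]
              exact hUT (by simp only [mem_filter, mem_univ, true_and]; exact ⟨j, rfl, hv⟩)
            · simp [hv]
        refine le_trans (Finset.card_le_card hsub) ?_
        refine le_trans Finset.card_biUnion_le ?_
        have hterm : ∀ T ∈ powersetCard m (univ : Finset (Fin k)),
            (Fintype.piFinset (fun j => if v ∈ Sets j then T else univ)).card
            = m ^ (D v).card * k ^ (n - (D v).card) := by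
          intro T hT
          obtain ⟨-, hTc⟩ := Finset.mem_powersetCard.mp hT
          rw [Fintype.card_piFinset]
          have h1 : ∀ j : Fin n, (if v ∈ Sets j then T else (univ : Finset (Fin k))).card
              = if v ∈ Sets j then m else k := by
            intro j; split <;> simp [hTc]
          rw [Finset.prod_congr rfl (fun j _ => h1 j), Finset.prod_ite, Finset.prod_const,
            Finset.prod_const]
          have h2 : (univ.filter (fun j => ¬ v ∈ Sets j)).card = n - (D v).card := by
            have h3 := Finset.card_filter_add_card_filter_not
              (s := (univ : Finset (Fin n))) (p := fun j => v ∈ Sets j)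
            simp only [card_univ, Fintype.card_fin] at h3
            have h4 : (D v).card = (univ.filter (fun j => v ∈ Sets j)).card := rfl
            omega
          rw [h2]
        rw [Finset.sum_congr rfl hterm, Finset.sum_const, Finset.card_powersetCard,
          card_univ, Fintype.card_fin, smul_eq_mul]
      -- real bound for each v
      have hrealv : ∀ v : α, ((univ.filter fun f : Fin n → Fin k => lv f v ≤ m).card : ℝ)
          < (k:ℝ)^n / (n:ℝ)^2 := by
        intro v
        set d := (D v).card with hd
        have hLd : lstar ≤ d := hdL v
        have hdn' : d ≤ n := hdn v
        have hmd : m ≤ d := le_trans hmL hLd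
        rw [lt_div_iff₀ (by positivity)]
        have hcast : ((univ.filter fun f : Fin n → Fin k => lv f v ≤ m).card : ℝ)
            ≤ (k.choose m : ℝ) * ((m:ℝ) ^ d * (k:ℝ) ^ (n - d)) := by
          have := hcount v
          exact_mod_cast this
        refine lt_of_le_of_lt (mul_le_mul_of_nonneg_right hcast (by positivity)) ?_
        -- core inequality
        have hexp83 : Real.exp (8/3) < 24 * Real.log n := by
          have h20 : Real.exp (8/3) < 16 := by
            rw [← Real.exp_log (by norm_num : (0:ℝ) < 16)]
            apply Real.exp_lt_exp.mpr
            have : Real.log 16 = 4 * Real.log 2 := by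
              rw [show (16:ℝ) = 2^(4:ℕ) by norm_num, Real.log_pow]
              push_cast; ring
            rw [this]; linarith
          linarith
        have hKM : 24 * Real.log n * (m:ℝ) ≤ (k:ℝ) := by
          have : (m:ℝ) * (24 * Real.log n) ≤ (lstar:ℝ) := by
            rw [← le_div_iff₀ (by positivity)]
            exact hmt
          have hlk : (lstar:ℝ) ≤ (k:ℝ) := by exact_mod_cast hLk
          nlinarith
        have hfinal : 2 * Real.log n + (m:ℝ) < (8/3) * ((d:ℝ) - (m:ℝ)) := by
          have h16m : 16 * (m:ℝ) ≤ (lstar:ℝ) := by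
            have : (m:ℝ) * (24 * Real.log n) ≤ (lstar:ℝ) := by
              rw [← le_div_iff₀ (by positivity)]; exact hmt
            nlinarith
          have hLd' : (lstar:ℝ) ≤ (d:ℝ) := by exact_mod_cast hLd
          linarith
        have hdmc : ((d - m : ℕ) : ℝ) = (d:ℝ) - (m:ℝ) := by
          push_cast [Nat.cast_sub hmd]; ring
        have core : (m:ℝ)^(d-m) * (Real.exp m * (n:ℝ)^2) < (k:ℝ)^(d-m) := by
          have step1 : Real.exp m * (n:ℝ)^2 < (24 * Real.log n)^(d-m) := by
            have e1 : Real.exp m * (n:ℝ)^2 = Real.exp ((m:ℝ) + 2 * Real.log n) := by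
              rw [Real.exp_add]
              congr 1
              rw [show (2:ℝ) * Real.log n = Real.log ((n:ℝ)^2) by
                rw [Real.log_pow]; push_cast; ring]
              exact (Real.exp_log (by positivity)).symm
            have e2 : Real.exp ((8/3) * ((d - m : ℕ):ℝ)) ≤ (24 * Real.log n)^(d-m) := by
              rw [show (8:ℝ)/3 * ((d - m : ℕ):ℝ) = ((d-m:ℕ):ℝ) * (8/3) by ring,
                Real.exp_nat_mul]
              exact pow_le_pow_left₀ (Real.exp_nonneg _) hexp83.le _
            refine lt_of_lt_of_le ?_ e2
            rw [e1]
            apply Real.exp_lt_exp.mpr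
            rw [hdmc]
            linarith
          have step2 : (m:ℝ)^(d-m) * (24 * Real.log n)^(d-m) ≤ (k:ℝ)^(d-m) := by
            rw [← mul_pow]
            apply pow_le_pow_left₀ (by positivity)
            nlinarith
          calc (m:ℝ)^(d-m) * (Real.exp m * (n:ℝ)^2)
              < (m:ℝ)^(d-m) * (24 * Real.log n)^(d-m) := by
                apply mul_lt_mul_of_pos_left step1 (by positivity)
            _ ≤ (k:ℝ)^(d-m) := step2
        -- assemble
        have hchoose : (k.choose m : ℝ) * (m ! : ℝ) ≤ (k:ℝ)^m := by
          have h5 : k.choose m * m ! ≤ k ^ m := by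
            rw [mul_comm, ← Nat.descFactorial_eq_factorial_mul_choose]
            exact Nat.descFactorial_le_pow k m
          exact_mod_cast h5
        have hfact : (0:ℝ) < (m ! : ℝ) := by exact_mod_cast m.factorial_pos
        have hmm : (m:ℝ)^m ≤ Real.exp m * (m ! : ℝ) := aux_pow_self_le m
        have hsplitM : (m:ℝ)^d = (m:ℝ)^(d-m) * (m:ℝ)^m := by
          rw [← pow_add]
          congr 1
          omega
        have hsplitK : (k:ℝ)^n = (k:ℝ)^(n-d) * ((k:ℝ)^(d-m) * (k:ℝ)^m) := by
          rw [← pow_add, ← pow_add]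
          congr 1
          omega
        calc (k.choose m : ℝ) * ((m:ℝ) ^ d * (k:ℝ) ^ (n - d)) * (n:ℝ)^2
            ≤ (k.choose m : ℝ) * ((m:ℝ)^(d-m) * (Real.exp m * (m ! : ℝ))
              * (k:ℝ)^(n-d)) * (n:ℝ)^2 := by
              rw [hsplitM]
              have hb : (m:ℝ)^(d-m) * (m:ℝ)^m * (k:ℝ)^(n-d)
                  ≤ (m:ℝ)^(d-m) * (Real.exp m * (m ! : ℝ)) * (k:ℝ)^(n-d) := by
                apply mul_le_mul_of_nonneg_right _ (by positivity)
                exact mul_le_mul_of_nonneg_left hmm (by positivity)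
              have hcn : (0:ℝ) ≤ (k.choose m : ℝ) := by positivity
              exact mul_le_mul_of_nonneg_right
                (mul_le_mul_of_nonneg_left hb hcn) (by positivity)
          _ = ((k.choose m : ℝ) * (m ! : ℝ))
              * ((m:ℝ)^(d-m) * Real.exp m * (k:ℝ)^(n-d) * (n:ℝ)^2) := by ring
          _ ≤ (k:ℝ)^m * ((m:ℝ)^(d-m) * Real.exp m * (k:ℝ)^(n-d) * (n:ℝ)^2) := by
              refine mul_le_mul_of_nonneg_right hchoose ?_
              positivity
          _ = (k:ℝ)^m * (k:ℝ)^(n-d) * ((m:ℝ)^(d-m) * (Real.exp m * (n:ℝ)^2)) := by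
              ring
          _ < (k:ℝ)^m * (k:ℝ)^(n-d) * (k:ℝ)^(d-m) := by
              apply mul_lt_mul_of_pos_left core (by positivity)
          _ = (k:ℝ)^n := by rw [hsplitK]; ring
      -- union bound
      have hQsub : Q ⊆ (univ : Finset α).biUnion
          (fun v => univ.filter fun f : Fin n → Fin k => lv f v ≤ m) := by
        intro f hf
        rw [hQdef, mem_filter] at hf
        obtain ⟨-, v, hv⟩ := hf
        refine Finset.mem_biUnion.mpr ⟨v, mem_univ v, ?_⟩
        simp only [mem_filter, mem_univ, true_and]
        exact Nat.le_floor hv.le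
      have hQle : (Q.card : ℝ) ≤ ∑ v : α, ((univ.filter fun f : Fin n → Fin k =>
          lv f v ≤ m).card : ℝ) := by
        have h1 := le_trans (Finset.card_le_card hQsub) Finset.card_biUnion_le
        exact_mod_cast h1
      have hsum : ∑ v : α, ((univ.filter fun f : Fin n → Fin k => lv f v ≤ m).card : ℝ)
          < ∑ _v : α, (k:ℝ)^n / (n:ℝ)^2 :=
        Finset.sum_lt_sum_of_nonempty univ_nonempty (fun v _ => hrealv v)
      have hconst : ∑ _v : α, (k:ℝ)^n / (n:ℝ)^2 ≤ (k:ℝ)^n / n := by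
        rw [Finset.sum_const, card_univ, nsmul_eq_mul]
        have hca : (Fintype.card α : ℝ) ≤ (n:ℝ) := by exact_mod_cast hcard
        have h6 : (n:ℝ) * ((k:ℝ)^n/(n:ℝ)^2) = (k:ℝ)^n / n := by
          field_simp
        calc (Fintype.card α : ℝ) * ((k:ℝ)^n/(n:ℝ)^2)
            ≤ (n:ℝ) * ((k:ℝ)^n/(n:ℝ)^2) :=
              mul_le_mul_of_nonneg_right hca (by positivity)
          _ = (k:ℝ)^n / n := h6
      linarith
  -- finish
  have hfilter_eq : (univ.filter fun f : Fin n → Fin k =>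
      ∀ v : α, t ≤ (lv f v : ℝ)) = univ.filter
        (fun f : Fin n → Fin k => ¬ ∃ v : α, (lv f v : ℝ) < t) := by
    apply Finset.filter_congr
    intro f _
    push_neg
    rfl
  have hsplit : Q.card + (univ.filter fun f : Fin n → Fin k =>
      ∀ v : α, t ≤ (lv f v : ℝ)).card = k ^ n := by
    rw [hfilter_eq, hQdef, ← hcardfun]
    exact Finset.card_filter_add_card_filter_not _
  have hPc : ((univ.filter fun f : Fin n → Fin k =>
      ∀ v : α, t ≤ (lv f v : ℝ)).card : ℝ) = (k:ℝ)^n - Q.card := by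
    have := hsplit
    have h2 : ((Q.card + (univ.filter fun f : Fin n → Fin k =>
        ∀ v : α, t ≤ (lv f v : ℝ)).card : ℕ) : ℝ) = ((k ^ n : ℕ) : ℝ) := by
      exact_mod_cast congrArg (Nat.cast : ℕ → ℝ) this
    push_cast at h2
    linarith
  rw [hPc]
  rw [lt_div_iff₀ hn0] at key
  have : ((k:ℝ)^n - Q.card) / (k:ℝ)^n = 1 - (Q.card : ℝ) / (k:ℝ)^n := by
    field_simp
  rw [this]
  have h3 : (Q.card : ℝ) / (k:ℝ)^n < 1 / n := by
    rw [div_lt_div_iff₀ hkn hn0]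
    nlinarith
  linarith
end

section
/- Suppose the assignment f : {1,…,n} → {1,…,k} is greedy in the following sense: for every j ∈ {1,…,n} and every i ∈ {1,…,k}, the marginal gain |S_j \ ⋃_{j' < j, f(j')=f(j)} S_{j'}| is at least |S_j \ ⋃_{j' < j, f(j')=i} S_{j'}|. Then cov(f) ≥ OPT/2, where OPT is the maximum total coverage over all assignments. -/
open Finset

lemma aux_card {α : Type*} [DecidableEq α] {n : ℕ} (S : Fin n → Finset α)
    (T : Finset (Fin n)) :
    (T.biUnion S).card = ∑ j ∈ T, (S j \ ((T.filter fun j' => j' < j).biUnion S)).card := by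
  induction T using Finset.strongInduction with
  | _ T ih =>
    rcases T.eq_empty_or_nonempty with rfl | hT
    · simp
    · have hmT : T.max' hT ∈ T := T.max'_mem hT
      set m := T.max' hT with hm
      set T' := T.erase m with hT'def
      have hT' : T = insert m T' := (Finset.insert_erase hmT).symm
      have hlt : ∀ j ∈ T', j < m := fun j hj =>
        lt_of_le_of_ne (T.le_max' j (Finset.mem_of_mem_erase hj)) (Finset.ne_of_mem_erase hj)
      have hfm : T.filter (fun j' => j' < m) = T' := by
        ext j
        simp only [Finset.mem_filter, hT'def, Finset.mem_erase]
        constructor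
        · rintro ⟨hj, hlt'⟩; exact ⟨ne_of_lt hlt', hj⟩
        · rintro ⟨hne, hj⟩; exact ⟨hj, lt_of_le_of_ne (T.le_max' j hj) hne⟩
      have hfj : ∀ j ∈ T', T.filter (fun j' => j' < j) = T'.filter (fun j' => j' < j) := by
        intro j hj
        ext j'
        simp only [Finset.mem_filter, hT'def, Finset.mem_erase]
        constructor
        · rintro ⟨hj', hlt'⟩
          exact ⟨⟨ne_of_lt (hlt'.trans (hlt j hj)), hj'⟩, hlt'⟩
        · rintro ⟨⟨_, hj'⟩, hlt'⟩; exact ⟨hj', hlt'⟩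
      have hss : T' ⊂ T := Finset.erase_ssubset hmT
      rw [hT', Finset.biUnion_insert, Finset.sum_insert (Finset.notMem_erase m T)]
      rw [← Finset.card_sdiff_add_card]
      congr 1
      · rw [← hT', hfm]
      · rw [ih T' hss]
        apply Finset.sum_congr rfl
        intro j hj
        rw [← hT', hfj j hj]

/-- SET K-COVER, distributed greedy algorithm: if the assignment `f` is greedy (each
subset `S_j`, processed in order, is assigned to a cover on which it newly covers at
least as many elements as on any other cover), then `cov f ≥ OPT / 2`. -/
theorem greedy_half_approximation (α : Type*) [Fintype α] [DecidableEq α]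
    (n k : ℕ) (hk : 1 ≤ k) (Sets : Fin n → Finset α) (f : Fin n → Fin k)
    (hgreedy : ∀ j : Fin n, ∀ i : Fin k,
      (Sets j \ ((univ.filter fun j' => j' < j ∧ f j' = i).biUnion Sets)).card
        ≤ (Sets j \ ((univ.filter fun j' => j' < j ∧ f j' = f j).biUnion Sets)).card) :
    (univ.sup fun g : Fin n → Fin k =>
        ∑ i : Fin k, ((univ.filter fun j => g j = i).biUnion Sets).card)
      ≤ 2 * ∑ i : Fin k, ((univ.filter fun j => f j = i).biUnion Sets).card := by
  set h : Fin n → Fin k → ℕ := fun j i =>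
    (Sets j \ ((univ.filter fun j' => j' < j ∧ f j' = i).biUnion Sets)).card with hh
  -- cov f = ∑ j, h j (f j)
  have hcov : ∑ i : Fin k, ((univ.filter fun j => f j = i).biUnion Sets).card
      = ∑ j : Fin n, h j (f j) := by
    have : ∀ i : Fin k, ((univ.filter fun j => f j = i).biUnion Sets).card
        = ∑ j ∈ univ.filter (fun j => f j = i), h j i := by
      intro i
      rw [aux_card]
      apply Finset.sum_congr rfl
      intro j hj
      simp only [hh]
      congr 2
      rw [Finset.filter_filter]
      congr 1
      apply Finset.filter_congr
      intro j' _
      simp [and_comm]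
    simp_rw [this]
    rw [← Finset.sum_fiberwise univ f (fun j => h j (f j))]
    apply Finset.sum_congr rfl
    intro i _
    apply Finset.sum_congr rfl
    intro j hj
    simp only [Finset.mem_filter] at hj
    rw [hj.2]
  apply Finset.sup_le
  intro g _
  have hbound : ∀ i : Fin k, ((univ.filter fun j => g j = i).biUnion Sets).card
      ≤ ((univ.filter fun j => f j = i).biUnion Sets).card
        + ∑ j ∈ univ.filter (fun j => g j = i), h j i := by
    intro i
    have hsub : ((univ.filter fun j => g j = i).biUnion Sets) ⊆
        ((univ.filter fun j => f j = i).biUnion Sets) ∪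
        ((univ.filter fun j => g j = i).biUnion fun j =>
          Sets j \ ((univ.filter fun j' => j' < j ∧ f j' = i).biUnion Sets)) := by
      intro x hx
      simp only [Finset.mem_biUnion, Finset.mem_filter, Finset.mem_univ, true_and] at hx
      obtain ⟨j, hgj, hxj⟩ := hx
      by_cases hc : ∃ j', f j' = i ∧ x ∈ Sets j'
      · obtain ⟨j', hfj', hxj'⟩ := hc
        exact Finset.mem_union_left _ (Finset.mem_biUnion.mpr
          ⟨j', Finset.mem_filter.mpr ⟨Finset.mem_univ _, hfj'⟩, hxj'⟩)
      · apply Finset.mem_union_right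
        apply Finset.mem_biUnion.mpr
        refine ⟨j, Finset.mem_filter.mpr ⟨Finset.mem_univ _, hgj⟩, ?_⟩
        rw [Finset.mem_sdiff]
        refine ⟨hxj, ?_⟩
        intro hmem
        simp only [Finset.mem_biUnion, Finset.mem_filter, Finset.mem_univ, true_and] at hmem
        obtain ⟨j', ⟨_, hfj'⟩, hxj'⟩ := hmem
        exact hc ⟨j', hfj', hxj'⟩
    calc ((univ.filter fun j => g j = i).biUnion Sets).card
        ≤ (((univ.filter fun j => f j = i).biUnion Sets) ∪
          ((univ.filter fun j => g j = i).biUnion fun j =>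
            Sets j \ ((univ.filter fun j' => j' < j ∧ f j' = i).biUnion Sets))).card :=
          Finset.card_le_card hsub
      _ ≤ ((univ.filter fun j => f j = i).biUnion Sets).card
          + (((univ.filter fun j => g j = i)).biUnion fun j =>
            Sets j \ ((univ.filter fun j' => j' < j ∧ f j' = i).biUnion Sets)).card :=
          Finset.card_union_le _ _
      _ ≤ _ := by
          gcongr
          exact Finset.card_biUnion_le
  calc ∑ i : Fin k, ((univ.filter fun j => g j = i).biUnion Sets).card
      ≤ ∑ i : Fin k, (((univ.filter fun j => f j = i).biUnion Sets).card
        + ∑ j ∈ univ.filter (fun j => g j = i), h j i) :=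
        Finset.sum_le_sum fun i _ => hbound i
    _ = (∑ i : Fin k, ((univ.filter fun j => f j = i).biUnion Sets).card)
        + ∑ i : Fin k, ∑ j ∈ univ.filter (fun j => g j = i), h j i := by
        rw [Finset.sum_add_distrib]
    _ ≤ (∑ i : Fin k, ((univ.filter fun j => f j = i).biUnion Sets).card)
        + ∑ i : Fin k, ∑ j ∈ univ.filter (fun j => g j = i), h j (f j) := by
        gcongr with i _ j _
        exact hgreedy j i
    _ = (∑ i : Fin k, ((univ.filter fun j => f j = i).biUnion Sets).card)
        + ∑ j : Fin n, h j (f j) := by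
        rw [Finset.sum_fiberwise univ g (fun j => h j (f j))]
    _ = 2 * ∑ i : Fin k, ((univ.filter fun j => f j = i).biUnion Sets).card := by
        rw [← hcov]; ring
end

section
/- For j ∈ {1,…,n} and v ∈ S, let y_v(j) = |{j' : j ≤ j' ≤ n and v ∈ S_{j'}}|. Suppose the assignment f : {1,…,n} → {1,…,k} is weighted-greedy: for every j and every i ∈ {1,…,k}, ∑_{v ∈ S_j \ ⋃_{j' < j, f(j')=f(j)} S_{j'}} (1 - 1/k)^{y_v(j) - 1} ≥ ∑_{v ∈ S_j \ ⋃_{j' < j, f(j')=i} S_{j'}} (1 - 1/k)^{y_v(j) - 1}. Then cov(f) ≥ ∑_{v ∈ S} (k - k(1 - 1/k)^{N_v}); in particular cov(f) ≥ (1 - 1/e) · OPT. -/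
open Finset

set_option linter.unusedSectionVars false

section WGAaux
variable {α : Type*} [Fintype α] [DecidableEq α]

/-- past sets (before time `t`) containing `v` -/
def WGA.Pset (n : ℕ) (Sets : Fin n → Finset α) (v : α) (t : ℕ) : Finset (Fin n) :=
  univ.filter fun j' => j'.val < t ∧ v ∈ Sets j'

/-- number of remaining sets (time `≥ t`) containing `v` -/
def WGA.rr (n : ℕ) (Sets : Fin n → Finset α) (v : α) (t : ℕ) : ℕ :=
  (univ.filter fun j' : Fin n => t ≤ j'.val ∧ v ∈ Sets j').card

/-- number of colors covering `v` before time `t` -/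
def WGA.cc (n k : ℕ) (Sets : Fin n → Finset α) (f : Fin n → Fin k) (v : α) (t : ℕ) : ℕ :=
  ((WGA.Pset n Sets v t).image f).card

/-- the potential function -/
noncomputable def WGA.Phi (n k : ℕ) (Sets : Fin n → Finset α) (f : Fin n → Fin k) (t : ℕ) : ℝ :=
  ∑ v : α, ((k:ℝ) - ((k:ℝ) - (WGA.cc n k Sets f v t : ℝ)) * (1 - 1/(k:ℝ)) ^ (WGA.rr n Sets v t))

namespace WGA

set_option linter.unusedSectionVars false

lemma rr_succ (n : ℕ) (Sets : Fin n → Finset α) (t : ℕ) (ht : t < n) (v : α)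
    (hv : v ∈ Sets ⟨t, ht⟩) : rr n Sets v t = rr n Sets v (t+1) + 1 := by
  unfold rr
  have h : (univ.filter fun j' : Fin n => t ≤ j'.val ∧ v ∈ Sets j')
      = insert ⟨t, ht⟩ (univ.filter fun j' : Fin n => t+1 ≤ j'.val ∧ v ∈ Sets j') := by
    ext j'
    simp only [mem_filter, mem_univ, true_and, mem_insert]
    constructor
    · rintro ⟨h1, h2⟩
      rcases eq_or_lt_of_le h1 with h | h
      · left; exact Fin.ext h.symm
      · right; exact ⟨h, h2⟩
    · rintro (rfl | ⟨h1, h2⟩)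
      · exact ⟨le_refl _, hv⟩
      · exact ⟨by omega, h2⟩
  rw [h, card_insert_of_notMem (by simp)]

lemma rr_stable (n : ℕ) (Sets : Fin n → Finset α) (t : ℕ) (ht : t < n) (v : α)
    (hv : v ∉ Sets ⟨t, ht⟩) : rr n Sets v t = rr n Sets v (t+1) := by
  unfold rr
  congr 1
  ext j'
  simp only [mem_filter, mem_univ, true_and]
  constructor
  · rintro ⟨h1, h2⟩
    refine ⟨?_, h2⟩
    rcases eq_or_lt_of_le h1 with h | h
    · exact absurd h2 (by rwa [show j' = ⟨t, ht⟩ from Fin.ext h.symm])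
    · omega
  · rintro ⟨h1, h2⟩; exact ⟨by omega, h2⟩

lemma Pset_succ (n : ℕ) (Sets : Fin n → Finset α) (t : ℕ) (ht : t < n) (v : α)
    (hv : v ∈ Sets ⟨t, ht⟩) :
    Pset n Sets v (t+1) = insert ⟨t, ht⟩ (Pset n Sets v t) := by
  unfold Pset
  ext j'
  simp only [mem_filter, mem_univ, true_and, mem_insert]
  constructor
  · rintro ⟨h1, h2⟩
    rcases Nat.lt_succ_iff_lt_or_eq.mp h1 with h | h
    · right; exact ⟨h, h2⟩
    · left; exact Fin.ext h
  · rintro (rfl | ⟨h1, h2⟩)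
    · exact ⟨Nat.lt_succ_self t, hv⟩
    · exact ⟨by omega, h2⟩

lemma Pset_stable (n : ℕ) (Sets : Fin n → Finset α) (t : ℕ) (ht : t < n) (v : α)
    (hv : v ∉ Sets ⟨t, ht⟩) : Pset n Sets v (t+1) = Pset n Sets v t := by
  unfold Pset
  ext j'
  simp only [mem_filter, mem_univ, true_and]
  constructor
  · rintro ⟨h1, h2⟩
    refine ⟨?_, h2⟩
    rcases Nat.lt_succ_iff_lt_or_eq.mp h1 with h | h
    · exact h
    · exact absurd h2 (by rwa [show j' = ⟨t, ht⟩ from Fin.ext h])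
  · rintro ⟨h1, h2⟩; exact ⟨by omega, h2⟩

lemma j_notMem_Pset (n : ℕ) (Sets : Fin n → Finset α) (t : ℕ) (ht : t < n) (v : α) :
    (⟨t, ht⟩ : Fin n) ∉ Pset n Sets v t := by
  simp [Pset]

/-- double counting: total coverage equals, summed over elements, the number of
colors covering that element -/
lemma cov_eq (n k : ℕ) (Sets : Fin n → Finset α) (g : Fin n → Fin k) :
    (∑ i : Fin k, ((univ.filter fun j => g j = i).biUnion Sets).card)
      = ∑ v : α, ((univ.filter fun j : Fin n => v ∈ Sets j).image g).card := by
  have h1 : ∀ v : α, (univ.filter fun j : Fin n => v ∈ Sets j).image g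
      = univ.filter fun i : Fin k => v ∈ (univ.filter fun j => g j = i).biUnion Sets := by
    intro v; ext i
    simp only [mem_image, mem_filter, mem_univ, true_and, mem_biUnion]
    constructor
    · rintro ⟨j, hj, rfl⟩; exact ⟨j, rfl, hj⟩
    · rintro ⟨j, h2, h3⟩; exact ⟨j, h3, h2⟩
  have h2 : ∑ v : α, ((univ.filter fun j : Fin n => v ∈ Sets j).image g).card
      = ∑ v : α, (univ.filter fun i : Fin k =>
          v ∈ (univ.filter fun j => g j = i).biUnion Sets).card :=
    Finset.sum_congr rfl fun v _ => by rw [h1 v]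
  rw [h2]
  simp only [card_filter]
  rw [Finset.sum_comm]
  refine Finset.sum_congr rfl fun i _ => ?_
  rw [← card_filter]
  congr 1
  ext v
  simp

set_option maxHeartbeats 800000 in
/-- the potential is nondecreasing at a greedy step -/
lemma Phi_step (n k : ℕ) (hk : 1 ≤ k) (Sets : Fin n → Finset α) (f : Fin n → Fin k)
    (t : ℕ) (ht : t < n)
    (hg : ∀ i : Fin k,
      (∑ v ∈ (Sets ⟨t, ht⟩).filter (fun v => i ∉ (Pset n Sets v t).image f),
          (1 - 1/(k:ℝ)) ^ (rr n Sets v (t+1)))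
        ≤ ∑ v ∈ (Sets ⟨t, ht⟩).filter
            (fun v => f ⟨t, ht⟩ ∉ (Pset n Sets v t).image f),
          (1 - 1/(k:ℝ)) ^ (rr n Sets v (t+1))) :
    Phi n k Sets f t ≤ Phi n k Sets f (t+1) := by
  set j : Fin n := ⟨t, ht⟩ with hj
  have hk0 : (0:ℝ) < k := by exact_mod_cast Nat.lt_of_lt_of_le Nat.zero_lt_one hk
  have hk0' : (k:ℝ) ≠ 0 := ne_of_gt hk0
  have hq0 : 0 ≤ 1 - 1/(k:ℝ) := by
    have h1 : 1/(k:ℝ) ≤ 1 := by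
      rw [div_le_one hk0]; exact_mod_cast hk
    linarith
  set d : α → ℝ := fun v =>
    ((k:ℝ) - ((k:ℝ) - (cc n k Sets f v (t+1) : ℝ)) * (1 - 1/(k:ℝ)) ^ (rr n Sets v (t+1)))
    - ((k:ℝ) - ((k:ℝ) - (cc n k Sets f v t : ℝ)) * (1 - 1/(k:ℝ)) ^ (rr n Sets v t)) with hd
  have key : Phi n k Sets f (t+1) - Phi n k Sets f t = ∑ v ∈ Sets j, d v := by
    rw [Phi, Phi, ← Finset.sum_sub_distrib]
    refine (Finset.sum_subset (subset_univ _) fun v _ hv => ?_).symm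
    rw [rr_stable n Sets t ht v hv]
    have : cc n k Sets f v (t+1) = cc n k Sets f v t := by
      unfold cc; rw [Pset_stable n Sets t ht v hv]
    rw [this]; ring
  -- per element formula
  have hdv : ∀ v ∈ Sets j, d v
      = (if f j ∉ (Pset n Sets v t).image f then (1 - 1/(k:ℝ)) ^ (rr n Sets v (t+1)) else 0)
        - (1/(k:ℝ)) * (((k:ℝ) - (cc n k Sets f v t : ℝ)) * (1 - 1/(k:ℝ)) ^ (rr n Sets v (t+1))) := by
    intro v hv
    have hr := rr_succ n Sets t ht v hv
    have hP := Pset_succ n Sets t ht v hv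
    rw [hd]
    simp only
    rw [hr]
    by_cases hp : f j ∉ (Pset n Sets v t).image f
    · have hc1 : cc n k Sets f v (t+1) = cc n k Sets f v t + 1 := by
        unfold cc
        rw [hP, Finset.image_insert, Finset.card_insert_of_notMem hp]
      rw [hc1, if_pos hp, pow_succ]
      push_cast
      field_simp
      ring
    · have hc1 : cc n k Sets f v (t+1) = cc n k Sets f v t := by
        unfold cc
        rw [hP, Finset.image_insert, Finset.insert_eq_self.mpr (not_not.mp hp)]
      rw [hc1, if_neg hp, pow_succ]
      field_simp
      ring
  -- key double counting identity
  have hkey : ∑ i : Fin k, ∑ v ∈ (Sets j).filter (fun v => i ∉ (Pset n Sets v t).image f),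
        (1 - 1/(k:ℝ)) ^ (rr n Sets v (t+1))
      = ∑ v ∈ Sets j, (((k:ℝ) - (cc n k Sets f v t : ℝ)) * (1 - 1/(k:ℝ)) ^ (rr n Sets v (t+1))) := by
    have h1 : ∀ i : Fin k, ∑ v ∈ (Sets j).filter (fun v => i ∉ (Pset n Sets v t).image f),
          (1 - 1/(k:ℝ)) ^ (rr n Sets v (t+1))
        = ∑ v ∈ Sets j, if i ∉ (Pset n Sets v t).image f
            then (1 - 1/(k:ℝ)) ^ (rr n Sets v (t+1)) else 0 :=
      fun i => Finset.sum_filter _ _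
    rw [Finset.sum_congr rfl fun i _ => h1 i, Finset.sum_comm]
    refine Finset.sum_congr rfl fun v hv => ?_
    rw [← Finset.sum_filter, Finset.sum_const]
    have hcle : cc n k Sets f v t ≤ k := by
      have := Finset.card_le_univ ((Pset n Sets v t).image f)
      simpa [cc] using this
    have hcard : (univ.filter fun i : Fin k => i ∉ (Pset n Sets v t).image f).card
        = k - cc n k Sets f v t := by
      have h2 : (univ.filter fun i : Fin k => i ∉ (Pset n Sets v t).image f)
          = univ \ (Pset n Sets v t).image f := by
        ext i; simp [mem_sdiff]
      rw [h2, Finset.card_univ_diff]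
      simp [cc]
    rw [hcard, nsmul_eq_mul, Nat.cast_sub hcle]
  -- greedy bound
  have hA : ∑ v ∈ Sets j, (((k:ℝ) - (cc n k Sets f v t : ℝ)) * (1 - 1/(k:ℝ)) ^ (rr n Sets v (t+1)))
      ≤ (k:ℝ) * ∑ v ∈ (Sets j).filter (fun v => f j ∉ (Pset n Sets v t).image f),
          (1 - 1/(k:ℝ)) ^ (rr n Sets v (t+1)) := by
    rw [← hkey]
    calc ∑ i : Fin k, ∑ v ∈ (Sets j).filter (fun v => i ∉ (Pset n Sets v t).image f),
          (1 - 1/(k:ℝ)) ^ (rr n Sets v (t+1))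
        ≤ ∑ _i : Fin k, ∑ v ∈ (Sets j).filter (fun v => f j ∉ (Pset n Sets v t).image f),
            (1 - 1/(k:ℝ)) ^ (rr n Sets v (t+1)) := Finset.sum_le_sum (fun i _ => hg i)
      _ = (k:ℝ) * ∑ v ∈ (Sets j).filter (fun v => f j ∉ (Pset n Sets v t).image f),
            (1 - 1/(k:ℝ)) ^ (rr n Sets v (t+1)) := by
          rw [Finset.sum_const, card_univ, Fintype.card_fin, nsmul_eq_mul]
  -- combine
  have hsum : ∑ v ∈ Sets j, d v
      = (∑ v ∈ (Sets j).filter (fun v => f j ∉ (Pset n Sets v t).image f),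
          (1 - 1/(k:ℝ)) ^ (rr n Sets v (t+1)))
        - (1/(k:ℝ)) * ∑ v ∈ Sets j,
            (((k:ℝ) - (cc n k Sets f v t : ℝ)) * (1 - 1/(k:ℝ)) ^ (rr n Sets v (t+1))) := by
    rw [Finset.sum_congr rfl hdv, Finset.sum_sub_distrib, ← Finset.sum_filter, Finset.mul_sum]
  have hfin : 0 ≤ ∑ v ∈ Sets j, d v := by
    rw [hsum]
    have h3 : (1/(k:ℝ)) * ∑ v ∈ Sets j,
          (((k:ℝ) - (cc n k Sets f v t : ℝ)) * (1 - 1/(k:ℝ)) ^ (rr n Sets v (t+1)))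
        ≤ (1/(k:ℝ)) * ((k:ℝ) * ∑ v ∈ (Sets j).filter (fun v => f j ∉ (Pset n Sets v t).image f),
            (1 - 1/(k:ℝ)) ^ (rr n Sets v (t+1))) :=
      mul_le_mul_of_nonneg_left hA (by positivity)
    have h4 : (1/(k:ℝ)) * ((k:ℝ) * ∑ v ∈ (Sets j).filter
          (fun v => f j ∉ (Pset n Sets v t).image f),
          (1 - 1/(k:ℝ)) ^ (rr n Sets v (t+1)))
        = ∑ v ∈ (Sets j).filter (fun v => f j ∉ (Pset n Sets v t).image f),
            (1 - 1/(k:ℝ)) ^ (rr n Sets v (t+1)) := by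
      field_simp
    linarith
  linarith [key, hfin]

lemma Phi_zero (n k : ℕ) (Sets : Fin n → Finset α) (f : Fin n → Fin k) :
    Phi n k Sets f 0
      = ∑ v : α, ((k:ℝ) - (k:ℝ) * (1 - 1/(k:ℝ)) ^ ((univ.filter fun j => v ∈ Sets j).card)) := by
  unfold Phi
  refine Finset.sum_congr rfl fun v _ => ?_
  have hc : cc n k Sets f v 0 = 0 := by simp [cc, Pset]
  have hr : rr n Sets v 0 = (univ.filter fun j : Fin n => v ∈ Sets j).card := by simp [rr]
  rw [hc, hr]
  push_cast
  ring

lemma Phi_final (n k : ℕ) (Sets : Fin n → Finset α) (f : Fin n → Fin k) :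
    Phi n k Sets f n
      = ((∑ i : Fin k, ((univ.filter fun j => f j = i).biUnion Sets).card : ℕ) : ℝ) := by
  unfold Phi
  rw [cov_eq n k Sets f]
  push_cast
  refine Finset.sum_congr rfl fun v _ => ?_
  have hr : rr n Sets v n = 0 := by
    unfold rr
    rw [Finset.card_eq_zero]
    ext j'
    simp only [mem_filter, mem_univ, true_and, Finset.notMem_empty, iff_false]
    rintro ⟨h1, _⟩
    exact absurd h1 (Nat.not_le.mpr j'.isLt)
  have hc : cc n k Sets f v n = ((univ.filter fun j : Fin n => v ∈ Sets j).image f).card := by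
    unfold cc
    congr 2
    unfold Pset
    ext j'
    simp [j'.isLt]
  rw [hr, hc]
  ring

end WGA

/-- `(1-1/k)^k ≤ 1/e` -/
lemma WGA.q_pow_le (k : ℕ) (hk : 1 ≤ k) : (1 - 1/(k:ℝ)) ^ k ≤ 1 / Real.exp 1 := by
  have hk0 : (0:ℝ) < k := by exact_mod_cast Nat.lt_of_lt_of_le Nat.zero_lt_one hk
  have hq0 : 0 ≤ 1 - 1/(k:ℝ) := by
    have h1 : 1/(k:ℝ) ≤ 1 := by rw [div_le_one hk0]; exact_mod_cast hk
    linarith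
  have h1 : 1 - 1/(k:ℝ) ≤ Real.exp (-(1/(k:ℝ))) := by
    have := Real.add_one_le_exp (-(1/(k:ℝ)))
    linarith
  calc (1 - 1/(k:ℝ)) ^ k ≤ (Real.exp (-(1/(k:ℝ)))) ^ k := pow_le_pow_left₀ hq0 h1 k
    _ = Real.exp ((k:ℝ) * (-(1/(k:ℝ)))) := by rw [← Real.exp_nat_mul]
    _ = Real.exp (-1) := by
        congr 1
        field_simp
    _ = 1 / Real.exp 1 := by rw [Real.exp_neg]; rw [one_div]

/-- the concavity-type inequality `m (1-q^k) ≤ k (1-q^m)` for `m ≤ k`, `0 ≤ q ≤ 1` -/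
lemma WGA.geom_ineq (k m : ℕ) (hm : m ≤ k) (q : ℝ) (hq0 : 0 ≤ q) (hq1 : q ≤ 1) :
    (m:ℝ) * (1 - q ^ k) ≤ (k:ℝ) * (1 - q ^ m) := by
  have hgeom : ∀ t : ℕ, 1 - q ^ t = (1 - q) * ∑ i ∈ Finset.range t, q ^ i := by
    intro t
    have h := geom_sum_mul q t
    linear_combination h
  rw [hgeom k, hgeom m]
  have hkey : (m:ℝ) * ∑ i ∈ Finset.range k, q ^ i ≤ (k:ℝ) * ∑ i ∈ Finset.range m, q ^ i := by
    have hsplit : ∑ i ∈ Finset.range k, q ^ i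
        = (∑ i ∈ Finset.range m, q ^ i) + ∑ i ∈ Finset.Ico m k, q ^ i := by
      rw [Finset.sum_range_add_sum_Ico _ hm]
    rw [hsplit]
    have h1 : ∑ i ∈ Finset.Ico m k, q ^ i ≤ (k - m : ℕ) * q ^ m := by
      have := Finset.sum_le_card_nsmul (Finset.Ico m k) (fun i => q ^ i) (q ^ m)
        (fun i hi => pow_le_pow_of_le_one hq0 hq1 (Finset.mem_Ico.mp hi).1)
      simpa [Nat.card_Ico, nsmul_eq_mul] using this
    have h2 : (m:ℝ) * q ^ m ≤ ∑ i ∈ Finset.range m, q ^ i := by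
      have := Finset.card_nsmul_le_sum (Finset.range m) (fun i => q ^ i) (q ^ m)
        (fun i hi => pow_le_pow_of_le_one hq0 hq1 (le_of_lt (Finset.mem_range.mp hi)))
      simpa [nsmul_eq_mul] using this
    have hkm : ((k - m : ℕ) : ℝ) = (k:ℝ) - m := by
      rw [Nat.cast_sub hm]
    rw [hkm] at h1
    have hm0 : (0:ℝ) ≤ (m:ℕ) := Nat.cast_nonneg m
    have hkm0 : (0:ℝ) ≤ (k:ℝ) - m := by
      rw [← hkm]; exact Nat.cast_nonneg _
    have e1 : (m:ℝ) * ∑ i ∈ Finset.Ico m k, q ^ i ≤ (m:ℝ) * (((k:ℝ) - m) * q ^ m) :=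
      mul_le_mul_of_nonneg_left h1 hm0
    have e2 : ((k:ℝ) - m) * ((m:ℝ) * q ^ m) ≤ ((k:ℝ) - m) * ∑ i ∈ Finset.range m, q ^ i :=
      mul_le_mul_of_nonneg_left h2 hkm0
    nlinarith [e1, e2]
  nlinarith [hkey, sub_nonneg.mpr hq1]

/-- `(1-1/e) min(m,k) ≤ k - k(1-1/k)^m` -/
lemma WGA.min_bound (k : ℕ) (hk : 1 ≤ k) (m : ℕ) :
    (1 - 1 / Real.exp 1) * (min m k : ℕ) ≤ (k:ℝ) - (k:ℝ) * (1 - 1/(k:ℝ)) ^ m := by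
  have hk0 : (0:ℝ) < k := by exact_mod_cast Nat.lt_of_lt_of_le Nat.zero_lt_one hk
  have hq0 : 0 ≤ 1 - 1/(k:ℝ) := by
    have h1 : 1/(k:ℝ) ≤ 1 := by rw [div_le_one hk0]; exact_mod_cast hk
    linarith
  have hq1 : 1 - 1/(k:ℝ) ≤ 1 := by
    have : 0 < 1/(k:ℝ) := by positivity
    linarith
  have hqe := WGA.q_pow_le k hk
  rcases le_or_gt k m with h | h
  · rw [min_eq_right h]
    have h1 : (1 - 1/(k:ℝ)) ^ m ≤ (1 - 1/(k:ℝ)) ^ k :=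
      pow_le_pow_of_le_one hq0 hq1 h
    have h2 : (1 - 1/(k:ℝ)) ^ m ≤ 1 / Real.exp 1 := le_trans h1 hqe
    nlinarith [hk0]
  · rw [min_eq_left (le_of_lt h)]
    have hgi := WGA.geom_ineq k m (le_of_lt h) (1 - 1/(k:ℝ)) hq0 hq1
    have hm0 : (0:ℝ) ≤ m := Nat.cast_nonneg m
    nlinarith [hqe, hgi, hm0]

end WGAaux

/-- SET K-COVER, centralized (weighted) greedy algorithm: if the assignment `f` is
weighted-greedy with weights `(1 - 1/k)^(y_v(j) - 1)`, where `y_v(j)` is the number of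
subsets `S_{j'}` with `j' ≥ j` containing `v`, then
`cov f ≥ ∑_v (k - k (1 - 1/k)^{N_v})`; in particular `cov f ≥ (1 - 1/e) * OPT`. -/
theorem weighted_greedy_approximation (α : Type*) [Fintype α] [DecidableEq α]
    (n k : ℕ) (hk : 1 ≤ k) (Sets : Fin n → Finset α) (f : Fin n → Fin k)
    (y : α → Fin n → ℕ)
    (hy : ∀ v j, y v j = (univ.filter fun j' : Fin n => j ≤ j' ∧ v ∈ Sets j').card)
    (hgreedy : ∀ j : Fin n, ∀ i : Fin k,
      (∑ v ∈ Sets j \ ((univ.filter fun j' => j' < j ∧ f j' = i).biUnion Sets),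
          (1 - 1 / (k : ℝ)) ^ (y v j - 1))
        ≤ ∑ v ∈ Sets j \ ((univ.filter fun j' => j' < j ∧ f j' = f j).biUnion Sets),
            (1 - 1 / (k : ℝ)) ^ (y v j - 1)) :
    ((∑ i : Fin k, ((univ.filter fun j => f j = i).biUnion Sets).card : ℕ) : ℝ)
        ≥ ∑ v : α, ((k : ℝ) - (k : ℝ) *
            (1 - 1 / (k : ℝ)) ^ ((univ.filter fun j => v ∈ Sets j).card)) ∧
      ((∑ i : Fin k, ((univ.filter fun j => f j = i).biUnion Sets).card : ℕ) : ℝ)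
        ≥ (1 - 1 / Real.exp 1) *
            ((univ.sup fun g : Fin n → Fin k =>
              ∑ i : Fin k, ((univ.filter fun j => g j = i).biUnion Sets).card : ℕ) : ℝ) := by
  -- convert the greedy hypothesis to the form used in `Phi_step`
  have hstep : ∀ t (ht : t < n), WGA.Phi n k Sets f t ≤ WGA.Phi n k Sets f (t+1) := by
    intro t ht
    apply WGA.Phi_step n k hk Sets f t ht
    intro i
    have hset : ∀ i' : Fin k,
        Sets ⟨t, ht⟩ \ ((univ.filter fun j' => j' < (⟨t, ht⟩ : Fin n) ∧ f j' = i').biUnion Sets)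
          = (Sets ⟨t, ht⟩).filter (fun v => i' ∉ (WGA.Pset n Sets v t).image f) := by
      intro i'
      ext v
      simp only [mem_sdiff, mem_biUnion, mem_filter, mem_univ, true_and, WGA.Pset, mem_image,
        Fin.lt_def, not_exists, not_and]
      tauto
    have hexp : ∀ v ∈ Sets ⟨t, ht⟩, (1 - 1/(k:ℝ)) ^ (y v ⟨t, ht⟩ - 1)
        = (1 - 1/(k:ℝ)) ^ (WGA.rr n Sets v (t+1)) := by
      intro v hv
      congr 1
      have h1 : y v ⟨t, ht⟩ = WGA.rr n Sets v t := by
        rw [hy]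
        unfold WGA.rr
        congr 1
      rw [h1, WGA.rr_succ n Sets t ht v hv]
      omega
    have hgi := hgreedy ⟨t, ht⟩ i
    rw [hset i, hset (f ⟨t, ht⟩)] at hgi
    calc (∑ v ∈ (Sets ⟨t, ht⟩).filter (fun v => i ∉ (WGA.Pset n Sets v t).image f),
          (1 - 1/(k:ℝ)) ^ (WGA.rr n Sets v (t+1)))
        = ∑ v ∈ (Sets ⟨t, ht⟩).filter (fun v => i ∉ (WGA.Pset n Sets v t).image f),
            (1 - 1/(k:ℝ)) ^ (y v ⟨t, ht⟩ - 1) :=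
          Finset.sum_congr rfl fun v hv => (hexp v (Finset.mem_filter.mp hv).1).symm
      _ ≤ ∑ v ∈ (Sets ⟨t, ht⟩).filter (fun v => f ⟨t, ht⟩ ∉ (WGA.Pset n Sets v t).image f),
            (1 - 1/(k:ℝ)) ^ (y v ⟨t, ht⟩ - 1) := hgi
      _ = ∑ v ∈ (Sets ⟨t, ht⟩).filter (fun v => f ⟨t, ht⟩ ∉ (WGA.Pset n Sets v t).image f),
            (1 - 1/(k:ℝ)) ^ (WGA.rr n Sets v (t+1)) :=
          Finset.sum_congr rfl fun v hv => hexp v (Finset.mem_filter.mp hv).1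
  have hchain : ∀ t, t ≤ n → WGA.Phi n k Sets f 0 ≤ WGA.Phi n k Sets f t := by
    intro t
    induction t with
    | zero => intro _; exact le_refl _
    | succ t ih =>
        intro h
        exact le_trans (ih (by omega)) (hstep t (by omega))
  have part1 : ((∑ i : Fin k, ((univ.filter fun j => f j = i).biUnion Sets).card : ℕ) : ℝ)
      ≥ ∑ v : α, ((k : ℝ) - (k : ℝ) *
          (1 - 1 / (k : ℝ)) ^ ((univ.filter fun j => v ∈ Sets j).card)) := by
    rw [ge_iff_le, ← WGA.Phi_zero n k Sets f, ← WGA.Phi_final n k Sets f]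
    exact hchain n le_rfl
  refine ⟨part1, ?_⟩
  -- part 2
  have hcov_le : ∀ g : Fin n → Fin k,
      (∑ i : Fin k, ((univ.filter fun j => g j = i).biUnion Sets).card)
        ≤ ∑ v : α, min ((univ.filter fun j : Fin n => v ∈ Sets j).card) k := by
    intro g
    rw [WGA.cov_eq n k Sets g]
    refine Finset.sum_le_sum fun v _ => ?_
    refine le_min Finset.card_image_le ?_
    exact le_trans (Finset.card_le_univ _) (by simp)
  have hsup : (univ.sup fun g : Fin n → Fin k =>
        ∑ i : Fin k, ((univ.filter fun j => g j = i).biUnion Sets).card)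
      ≤ ∑ v : α, min ((univ.filter fun j : Fin n => v ∈ Sets j).card) k :=
    Finset.sup_le fun g _ => hcov_le g
  have he1 : (1:ℝ) ≤ Real.exp 1 := by
    have := Real.add_one_le_exp 1
    linarith
  have hco : (0:ℝ) ≤ 1 - 1/Real.exp 1 := by
    have h1 : 1/Real.exp 1 ≤ 1 := by
      rw [div_le_one (Real.exp_pos 1)]; exact he1
    linarith
  have hsupR : ((univ.sup fun g : Fin n → Fin k =>
        ∑ i : Fin k, ((univ.filter fun j => g j = i).biUnion Sets).card : ℕ) : ℝ)
      ≤ ((∑ v : α, min ((univ.filter fun j : Fin n => v ∈ Sets j).card) k : ℕ) : ℝ) := by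
    exact_mod_cast hsup
  calc (1 - 1 / Real.exp 1) *
        ((univ.sup fun g : Fin n → Fin k =>
          ∑ i : Fin k, ((univ.filter fun j => g j = i).biUnion Sets).card : ℕ) : ℝ)
      ≤ (1 - 1 / Real.exp 1) *
          ((∑ v : α, min ((univ.filter fun j : Fin n => v ∈ Sets j).card) k : ℕ) : ℝ) :=
        mul_le_mul_of_nonneg_left hsupR hco
    _ = ∑ v : α, (1 - 1 / Real.exp 1) *
          ((min ((univ.filter fun j : Fin n => v ∈ Sets j).card) k : ℕ) : ℝ) := by
        push_cast
        rw [Finset.mul_sum]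
    _ ≤ ∑ v : α, ((k : ℝ) - (k : ℝ) *
          (1 - 1 / (k : ℝ)) ^ ((univ.filter fun j => v ∈ Sets j).card)) :=
        Finset.sum_le_sum fun v _ =>
          WGA.min_bound k hk ((univ.filter fun j : Fin n => v ∈ Sets j).card)
    _ ≤ ((∑ i : Fin k, ((univ.filter fun j => f j = i).biUnion Sets).card : ℕ) : ℝ) := part1
end

section
/- Fix integers k ≥ 1, 0 ≤ x ≤ k, and y ≥ 0. Let T be a set of x covers out of {1,…,k}, and let g : {1,…,y} → {1,…,k} be chosen uniformly at random (each of the y remaining subsets containing v assigned independently and uniformly to a cover). Then the expected cardinality of T ∪ range(g) equals k - (k - x)(1 - 1/k)^y. -/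
open Finset

lemma avoid_count (k y : ℕ) (c : Fin k) :
    ((univ : Finset (Fin y → Fin k)).filter (fun g => ∀ i, g i ≠ c)).card = (k - 1) ^ y := by
  classical
  rw [← Fintype.card_subtype]
  rw [Fintype.card_congr (Equiv.subtypePiEquivPi (p := fun _ b => b ≠ c))]
  simp [Fintype.card_pi, Fintype.card_subtype_compl]

/-- Conditional expectation computation for one element in SET K-COVER: if the element
already belongs to the `x` covers of `T ⊆ {1,…,k}` and the remaining `y` subsets
containing it are each assigned independently and uniformly at random to one of the `k`
covers, then the expected number of covers containing the element is
`k - (k - x) * (1 - 1/k)^y`. -/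
theorem expected_coverage_conditional (k x y : ℕ) (hk : 1 ≤ k) (hx : x ≤ k)
    (T : Finset (Fin k)) (hT : T.card = x) :
    (∑ g : Fin y → Fin k, (((T ∪ univ.image g).card : ℕ) : ℝ)) / ((k : ℝ) ^ y)
      = (k : ℝ) - ((k : ℝ) - (x : ℝ)) * (1 - 1 / (k : ℝ)) ^ y := by
  classical
  have hk0 : (k : ℝ) ≠ 0 := by
    have : (0:ℝ) < k := by exact_mod_cast hk
    linarith
  have hK0 : ((k : ℝ)) ^ y ≠ 0 := pow_ne_zero _ hk0
  -- the sum equals x * k^y + (k - x) * (k^y - (k-1)^y)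
  have hsum : (∑ g : Fin y → Fin k, (((T ∪ univ.image g).card : ℕ) : ℝ))
      = (x : ℝ) * (k : ℝ) ^ y
        + ((k : ℝ) - (x : ℝ)) * ((k : ℝ) ^ y - ((k : ℝ) - 1) ^ y) := by
    have step1 : ∀ g : Fin y → Fin k,
        (((T ∪ univ.image g).card : ℕ) : ℝ)
          = ∑ c : Fin k, (if c ∈ T ∪ univ.image g then (1:ℝ) else 0) := by
      intro g
      rw [Finset.sum_boole]
      congr 1
      rw [Finset.filter_mem_eq_inter, Finset.univ_inter]
    rw [Finset.sum_congr rfl (fun g _ => step1 g), Finset.sum_comm]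
    have step2 : ∀ c : Fin k,
        (∑ g : Fin y → Fin k, (if c ∈ T ∪ univ.image g then (1:ℝ) else 0))
          = if c ∈ T then ((k:ℝ))^y else ((k:ℝ))^y - ((k:ℝ)-1)^y := by
      intro c
      by_cases hc : c ∈ T
      · simp only [hc, if_true]
        have : ∀ g : Fin y → Fin k, c ∈ T ∪ univ.image g := fun g =>
          Finset.mem_union_left _ hc
        simp only [this, if_true, Finset.sum_const, Finset.card_univ, nsmul_eq_mul, mul_one]
        simp [Fintype.card_fun]
      · simp only [hc, if_false]
        have hmem : ∀ g : Fin y → Fin k,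
            (c ∈ T ∪ univ.image g) ↔ ¬ (∀ i, g i ≠ c) := by
          intro g
          simp [Finset.mem_union, hc, eq_comm]
        rw [Finset.sum_congr rfl (fun g _ =>
          by rw [if_congr (hmem g) rfl rfl])]
        rw [Finset.sum_boole]
        rw [Finset.filter_not, Finset.card_sdiff_of_subset (Finset.filter_subset _ _)]
        rw [avoid_count, Finset.card_univ]
        have hcard : Fintype.card (Fin y → Fin k) = k ^ y := by
          simp [Fintype.card_fun]
        rw [hcard]
        have hle : (k-1)^y ≤ k^y := Nat.pow_le_pow_left (Nat.sub_le _ _) _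
        rw [Nat.cast_sub hle]
        push_cast [Nat.cast_sub hk]
        ring
    rw [Finset.sum_congr rfl (fun c _ => step2 c)]
    rw [Finset.sum_ite, Finset.sum_const, Finset.sum_const,
        Finset.filter_mem_eq_inter, Finset.univ_inter, hT,
        Finset.filter_not, Finset.filter_mem_eq_inter, Finset.univ_inter]
    have hcd : (univ \ T).card = k - x := by
      rw [Finset.card_sdiff_of_subset (Finset.subset_univ T), Finset.card_univ, hT,
          Fintype.card_fin]
    rw [hcd, nsmul_eq_mul, nsmul_eq_mul, Nat.cast_sub hx]
  rw [hsum]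
  have hpow : ((k:ℝ) - 1) ^ y = (1 - 1/(k:ℝ))^y * (k:ℝ)^y := by
    rw [← mul_pow]
    congr 1
    field_simp
  rw [hpow]
  field_simp
  ring
end

section
/- Let V be a finite set and R_1,…,R_m nonempty subsets of V. Form the SET 2-COVER instance whose elements are {1,…,m} and whose subsets are indexed by u ∈ V, with S_u = {i : u ∈ R_i}. Then for every partition of V into V_1 and V_2 (viewed as the assignment f sending u to 1 if u ∈ V_1 and to 2 if u ∈ V_2), the total coverage equals m + s, where s is the number of indices i such that both R_i ∩ V_1 and R_i ∩ V_2 are nonempty. In particular, there exists a partition splitting all m sets if and only if the SET 2-COVER instance admits an assignment with total coverage 2m. -/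
open Finset

theorem aux_main (V : Type*) [Fintype V] [DecidableEq V]
    (m : ℕ) (R : Fin m → Finset V) (hR : ∀ i, (R i).Nonempty) (f : V → Fin 2) :
    (∑ i : Fin 2,
        ((univ.filter fun u : V => f u = i).biUnion
          fun u => univ.filter fun i' : Fin m => u ∈ R i').card)
      = m + (univ.filter fun i : Fin m =>
          (∃ u ∈ R i, f u = 0) ∧ (∃ u ∈ R i, f u = 1)).card := by
  have hA : ∀ j : Fin 2,
      ((univ.filter fun u : V => f u = j).biUnion
          fun u => univ.filter fun i' : Fin m => u ∈ R i')
        = univ.filter fun i : Fin m => ∃ u ∈ R i, f u = j := by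
    intro j
    ext i
    simp [Finset.mem_biUnion]
    tauto
  rw [Fin.sum_univ_two, hA 0, hA 1]
  have h1 : (univ.filter fun i : Fin m => ∃ u ∈ R i, f u = 0) ∪
      (univ.filter fun i : Fin m => ∃ u ∈ R i, f u = 1) = univ := by
    apply Finset.eq_univ_of_forall
    intro i
    obtain ⟨u, hu⟩ := hR i
    rcases Fin.exists_fin_two.mp ⟨f u, rfl⟩ with h | h
    · exact Finset.mem_union_left _ (by simp; exact ⟨u, hu, h⟩)
    · exact Finset.mem_union_right _ (by simp; exact ⟨u, hu, h⟩)
  have h2 : (univ.filter fun i : Fin m => ∃ u ∈ R i, f u = 0) ∩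
      (univ.filter fun i : Fin m => ∃ u ∈ R i, f u = 1)
      = univ.filter fun i : Fin m =>
          (∃ u ∈ R i, f u = 0) ∧ (∃ u ∈ R i, f u = 1) := by
    rw [Finset.filter_and]
  have := Finset.card_union_add_card_inter
    (univ.filter fun i : Fin m => ∃ u ∈ R i, f u = 0)
    (univ.filter fun i : Fin m => ∃ u ∈ R i, f u = 1)
  rw [h1, h2, Finset.card_univ, Fintype.card_fin] at this
  omega

/-- Reduction from SET SPLITTING to SET 2-COVER: given nonempty subsets `R 1, …, R m`
of a finite ground set `V`, form the SET 2-COVER instance with elements `{1,…,m}` and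
subsets `S_u = {i : u ∈ R i}` for `u ∈ V`.  For every partition of `V` into two parts
(encoded by `f : V → Fin 2`), the total coverage equals `m` plus the number of sets
`R i` split by the partition; in particular some partition splits all `m` sets iff the
SET 2-COVER instance admits an assignment of total coverage `2 * m`. -/
theorem setSplitting_to_set2Cover (V : Type*) [Fintype V] [DecidableEq V]
    (m : ℕ) (R : Fin m → Finset V) (hR : ∀ i, (R i).Nonempty) :
    (∀ f : V → Fin 2,
        (∑ i : Fin 2,
            ((univ.filter fun u : V => f u = i).biUnion
              fun u => univ.filter fun i' : Fin m => u ∈ R i').card)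
          = m + (univ.filter fun i : Fin m =>
              (∃ u ∈ R i, f u = 0) ∧ (∃ u ∈ R i, f u = 1)).card) ∧
      ((∃ f : V → Fin 2, ∀ i : Fin m, (∃ u ∈ R i, f u = 0) ∧ (∃ u ∈ R i, f u = 1)) ↔
        (∃ f : V → Fin 2,
          (∑ i : Fin 2,
              ((univ.filter fun u : V => f u = i).biUnion
                fun u => univ.filter fun i' : Fin m => u ∈ R i').card)
            = 2 * m)) := by
  refine ⟨aux_main V m R hR, ?_, ?_⟩
  · rintro ⟨f, hf⟩
    refine ⟨f, ?_⟩
    rw [aux_main V m R hR f]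
    have : (univ.filter fun i : Fin m =>
        (∃ u ∈ R i, f u = 0) ∧ (∃ u ∈ R i, f u = 1)) = univ :=
      Finset.eq_univ_of_forall fun i => by simp [hf i]
    rw [this, Finset.card_univ, Fintype.card_fin]
    ring
  · rintro ⟨f, hf⟩
    refine ⟨f, fun i => ?_⟩
    rw [aux_main V m R hR f] at hf
    have hcard : (univ.filter fun i : Fin m =>
        (∃ u ∈ R i, f u = 0) ∧ (∃ u ∈ R i, f u = 1)).card = m := by omega
    have : (univ.filter fun i : Fin m =>
        (∃ u ∈ R i, f u = 0) ∧ (∃ u ∈ R i, f u = 1)) = univ := by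
      apply Finset.eq_univ_of_card
      simpa using hcard
    have := Finset.eq_univ_iff_forall.mp this i
    simpa using this
end
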